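/- arXiv:1712.00066 — 5 statements merged into one kernel-verified Lean document; each statement's English description precedes it below -/
import Mathlib

section
/- Every orientation-preserving homeomorphism h of the real line has a square root: there exists an orientation-preserving homeomorphism ψ of the real line such that ψ ∘ ψ = h. -/
/-!
Points fixed by `h` stay fixed. The order-convex hulls of the `h`-orbits partition the line, and
the hull of a non-fixed point contains no fixed point. If `b < h b` for some `b` in such a hull,
the chart `t ↦ h ^ ⌊t⌋ (b + fract t * (h b - b))` is an increasing bijection from the line onto
the hull that conjugates translation by `1` to `h`, so conjugating translation by `1 / 2` gives a
square root of `h` on the hull; on hulls where `h` moves points down, one does the same with `h⁻¹`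
and translation by `-1 / 2`. Each local square root maps its hull onto itself, so they glue to an
increasing bijection. Completeness is never used, so the construction works in any linearly
ordered field with a floor function.
-/

open Set

theorem strictMono_of_strictMonoOn_blocks {α : Type*} [LinearOrder α] {f : α → α}
    (P : α → Set α) (hmem : ∀ x, x ∈ P x) (heq : ∀ x y, y ∈ P x → P y = P x)
    (hconn : ∀ x, (P x).OrdConnected) (hmaps : ∀ x, f x ∈ P x)
    (hmono : ∀ x, StrictMonoOn f (P x)) : StrictMono f := by
  intro x y hxy
  by_cases hy : y ∈ P x
  · exact hmono x (hmem x) hy hxy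
  have hbelow : ∀ a ∈ P x, a < y := fun a ha =>
    lt_of_not_ge fun hya => hy ((hconn x).out (hmem x) ha ⟨hxy.le, hya⟩)
  by_contra! hle
  have hfx : f x ∈ P y := (hconn y).out (hmaps y) (hmem y) ⟨hle, (hbelow _ (hmaps x)).le⟩
  apply hy
  rw [← heq x _ (hmaps x), heq y _ hfx]
  exact hmem y

namespace OrderIso

section LinearOrder

variable {α : Type*} [LinearOrder α] {g : α ≃o α} {b x y : α}

lemma lt_inv_apply_iff : x < g⁻¹ x ↔ g x < x :=
  g.lt_symm_apply

lemma zpow_add_apply (g : α ≃o α) (m n : ℤ) (x : α) : (g ^ (m + n)) x = (g ^ m) ((g ^ n) x) := by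
  rw [zpow_add]; rfl

lemma zpow_add_one_apply (g : α ≃o α) (n : ℤ) (x : α) : (g ^ (n + 1)) x = g ((g ^ n) x) := by
  rw [add_comm, zpow_add_apply, zpow_one]

lemma le_zpow_neg_apply_iff (g : α ≃o α) (n : ℤ) : x ≤ (g ^ (-n)) y ↔ (g ^ n) x ≤ y := by
  rw [zpow_neg]; exact (g ^ n).le_symm_apply

lemma zpow_neg_apply_le_iff (g : α ≃o α) (n : ℤ) : (g ^ (-n)) y ≤ x ↔ y ≤ (g ^ n) x := by
  rw [zpow_neg]; exact (g ^ n).symm_apply_le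

lemma zpow_apply_eq_self (hx : g x = x) (n : ℤ) : (g ^ n) x = x := by
  induction n using Int.induction_on with
  | zero => rfl
  | succ n ih => rw [zpow_add_one_apply, ih, hx]
  | pred n ih => apply g.injective; rw [← zpow_add_one_apply, sub_add_cancel, ih, hx]

lemma strictMono_zpow_apply (hb : b < g b) : StrictMono fun n : ℤ => (g ^ n) b :=
  strictMono_int_of_lt_succ fun n => by
    simpa only [zpow_add_apply, zpow_one] using (g ^ n).strictMono hb

def orbitHull (g : α ≃o α) (x : α) : Set α :=
  {y | ∃ m n : ℤ, (g ^ m) x ≤ y ∧ y ≤ (g ^ n) x}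

lemma mem_orbitHull_self (g : α ≃o α) (x : α) : x ∈ g.orbitHull x :=
  ⟨0, 0, le_rfl, le_rfl⟩

lemma ordConnected_orbitHull (g : α ≃o α) (x : α) : (g.orbitHull x).OrdConnected :=
  ⟨fun _ ⟨m, _, ha, _⟩ _ ⟨_, n, _, hc⟩ _ hz => ⟨m, n, ha.trans hz.1, hz.2.trans hc⟩⟩

lemma mem_orbitHull_comm : y ∈ g.orbitHull x ↔ x ∈ g.orbitHull y := by
  constructor <;>
  · rintro ⟨m, n, hm, hn⟩
    exact ⟨-n, -m, (zpow_neg_apply_le_iff g n).2 hn, (le_zpow_neg_apply_iff g m).2 hm⟩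

lemma orbitHull_subset_of_mem (hy : y ∈ g.orbitHull x) : g.orbitHull y ⊆ g.orbitHull x := by
  obtain ⟨m, n, hm, hn⟩ := hy
  rintro z ⟨p, q, hp, hq⟩
  refine ⟨p + m, q + n, ?_, ?_⟩
  · rw [zpow_add_apply]; exact ((g ^ p).monotone hm).trans hp
  · rw [zpow_add_apply]; exact hq.trans ((g ^ q).monotone hn)

lemma orbitHull_eq_of_mem (hy : y ∈ g.orbitHull x) : g.orbitHull y = g.orbitHull x :=
  (orbitHull_subset_of_mem hy).antisymm (orbitHull_subset_of_mem (mem_orbitHull_comm.1 hy))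

lemma orbitHull_inv (g : α ≃o α) (x : α) : g⁻¹.orbitHull x = g.orbitHull x := by
  ext y
  simp only [orbitHull, inv_zpow']
  constructor
  · rintro ⟨m, n, h⟩; exact ⟨-m, -n, h⟩
  · rintro ⟨m, n, h⟩; exact ⟨-m, -n, by simpa only [neg_neg] using h⟩

lemma orbitHull_eq_singleton (hx : g x = x) : g.orbitHull x = {x} := by
  ext y
  simp only [orbitHull, zpow_apply_eq_self hx, exists_const, mem_singleton_iff]
  exact le_antisymm_iff.symm.trans eq_comm

lemma exists_zpow_apply_mem_Ico (hb : b < g b) (hy : y ∈ g.orbitHull b) :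
    ∃ k : ℤ, y ∈ Ico ((g ^ k) b) ((g ^ (k + 1)) b) := by
  obtain ⟨m, n, hm, hn⟩ := hy
  obtain ⟨k, hk, hmax⟩ := Int.exists_greatest_of_bdd (P := fun k : ℤ => (g ^ k) b ≤ y)
    ⟨n, fun k hk => (strictMono_zpow_apply hb).le_iff_le.1 (hk.trans hn)⟩ ⟨m, hm⟩
  exact ⟨k, hk, lt_of_not_ge fun h => (lt_add_one k).not_ge (hmax _ h)⟩

lemma lt_apply_of_mem_orbitHull (hb : b < g b) (hy : y ∈ g.orbitHull b) : y < g y := by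
  obtain ⟨k, hk, hk'⟩ := exists_zpow_apply_mem_Ico hb hy
  calc y < (g ^ (k + 1)) b := hk'
    _ = g ((g ^ k) b) := zpow_add_one_apply g k b
    _ ≤ g y := g.monotone hk

section Nonempty

variable [Nonempty α]

-- A choice depending only on the hull, so that all points of a hull use the same chart.
noncomputable def orbitBase (g : α ≃o α) (x : α) : α :=
  Classical.epsilon (· ∈ g.orbitHull x)

lemma orbitBase_mem (g : α ≃o α) (x : α) : g.orbitBase x ∈ g.orbitHull x :=
  Classical.epsilon_spec ⟨x, g.mem_orbitHull_self x⟩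

lemma orbitBase_eq_of_mem {y : α} (hy : y ∈ g.orbitHull x) : g.orbitBase y = g.orbitBase x := by
  rw [orbitBase, orbitHull_eq_of_mem hy, orbitBase]

lemma orbitBase_lt_apply (hx : x < g x) : g.orbitBase x < g (g.orbitBase x) :=
  lt_apply_of_mem_orbitHull hx (g.orbitBase_mem x)

lemma mem_orbitHull_orbitBase (g : α ≃o α) (x : α) : x ∈ g.orbitHull (g.orbitBase x) :=
  mem_orbitHull_comm.1 (g.orbitBase_mem x)

end Nonempty

end LinearOrder

section Field

variable {K : Type*} [Field K] [LinearOrder K] [FloorRing K] {g h : K ≃o K} {b x : K}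

def orbitChart (g : K ≃o K) (b t : K) : K :=
  (g ^ ⌊t⌋) (b + Int.fract t * (g b - b))

noncomputable def orbitFlow (g : K ≃o K) (b s x : K) : K :=
  g.orbitChart b (Function.invFun (g.orbitChart b) x + s)

noncomputable def orbitFlowAt (g : K ≃o K) (s x : K) : K :=
  g.orbitFlow (g.orbitBase x) s x

noncomputable def sqrtFun (h : K ≃o K) (x : K) : K :=
  if x < h x then h.orbitFlowAt (1 / 2) x
  else if h x < x then h⁻¹.orbitFlowAt (-(1 / 2)) x
  else x

lemma sqrtFun_of_lt (hx : x < h x) : h.sqrtFun x = h.orbitFlowAt (1 / 2) x :=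
  if_pos hx

lemma sqrtFun_of_gt (hx : h x < x) : h.sqrtFun x = h⁻¹.orbitFlowAt (-(1 / 2)) x := by
  rw [sqrtFun, if_neg hx.not_gt, if_pos hx]

lemma sqrtFun_of_eq (hx : h x = x) : h.sqrtFun x = x := by
  simp [sqrtFun, hx]

variable [IsStrictOrderedRing K]

lemma orbitChart_add_one (g : K ≃o K) (b t : K) :
    g.orbitChart b (t + 1) = g (g.orbitChart b t) := by
  rw [orbitChart, Int.floor_add_one, Int.fract_add_one, zpow_add_one_apply, orbitChart]

lemma orbitChart_intCast_add (g : K ≃o K) (b : K) (n : ℤ) {r : K} (hr₀ : 0 ≤ r) (hr₁ : r < 1) :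
    g.orbitChart b (n + r) = (g ^ n) (b + r * (g b - b)) := by
  rw [orbitChart, Int.floor_intCast_add, Int.fract_intCast_add, Int.floor_eq_zero_iff.2 ⟨hr₀, hr₁⟩,
    add_zero, Int.fract_eq_self.2 ⟨hr₀, hr₁⟩]

lemma orbitChart_mem_Ico (hb : b < g b) (t : K) :
    g.orbitChart b t ∈ Ico ((g ^ ⌊t⌋) b) ((g ^ (⌊t⌋ + 1)) b) := by
  have hfract : 0 ≤ Int.fract t * (g b - b) := mul_nonneg (Int.fract_nonneg t) (by linarith)
  have hfract' : Int.fract t * (g b - b) < g b - b :=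
    mul_lt_of_lt_one_left (by linarith) (Int.fract_lt_one t)
  rw [zpow_add_apply, zpow_one]
  exact ⟨(g ^ ⌊t⌋).monotone (by linarith), (g ^ ⌊t⌋).strictMono (by linarith)⟩

lemma orbitChart_strictMono (hb : b < g b) : StrictMono (g.orbitChart b) := by
  intro s t hst
  rcases (Int.floor_mono hst.le).eq_or_lt with hfloor | hfloor
  · have hfract : Int.fract s < Int.fract t := by
      rw [Int.fract, Int.fract, hfloor]; linarith
    rw [orbitChart, orbitChart, hfloor]
    exact (g ^ ⌊t⌋).strictMono (by gcongr)
  · calc g.orbitChart b s < (g ^ (⌊s⌋ + 1)) b := (orbitChart_mem_Ico hb s).2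
      _ ≤ (g ^ ⌊t⌋) b := (strictMono_zpow_apply hb).monotone (by omega)
      _ ≤ g.orbitChart b t := (orbitChart_mem_Ico hb t).1

lemma range_orbitChart (hb : b < g b) : range (g.orbitChart b) = g.orbitHull b := by
  ext y
  constructor
  · rintro ⟨t, rfl⟩
    exact ⟨⌊t⌋, ⌊t⌋ + 1, (orbitChart_mem_Ico hb t).1, (orbitChart_mem_Ico hb t).2.le⟩
  · intro hy
    obtain ⟨k, hk, hk'⟩ := exists_zpow_apply_mem_Ico hb hy
    obtain ⟨w, rfl⟩ : ∃ w, (g ^ k) w = y := ⟨_, (g ^ k).apply_symm_apply y⟩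
    rw [zpow_add_apply, zpow_one] at hk'
    have hbw : b ≤ w := (g ^ k).le_iff_le.1 hk
    have hwb : w < g b := (g ^ k).lt_iff_lt.1 hk'
    have hd : 0 < g b - b := by linarith
    refine ⟨k + (w - b) / (g b - b), ?_⟩
    rw [orbitChart_intCast_add g b k (div_nonneg (by linarith) hd.le)
      ((div_lt_one hd).2 (by linarith)), div_mul_cancel₀ _ hd.ne', add_sub_cancel]

lemma orbitChart_invFun (hb : b < g b) (hx : x ∈ g.orbitHull b) :
    g.orbitChart b (Function.invFun (g.orbitChart b) x) = x :=
  Function.invFun_eq (by rwa [← range_orbitChart hb] at hx)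

lemma invFun_orbitChart (hb : b < g b) (t : K) :
    Function.invFun (g.orbitChart b) (g.orbitChart b t) = t :=
  Function.leftInverse_invFun (orbitChart_strictMono hb).injective t

lemma orbitFlow_mem (hb : b < g b) (s x : K) : g.orbitFlow b s x ∈ g.orbitHull b :=
  range_orbitChart hb ▸ mem_range_self _

lemma orbitFlow_orbitFlow (hb : b < g b) (s s' x : K) :
    g.orbitFlow b s (g.orbitFlow b s' x) = g.orbitFlow b (s' + s) x := by
  rw [orbitFlow, orbitFlow, invFun_orbitChart hb, add_assoc, orbitFlow]

lemma orbitFlow_one (hb : b < g b) (hx : x ∈ g.orbitHull b) : g.orbitFlow b 1 x = g x := by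
  rw [orbitFlow, orbitChart_add_one, orbitChart_invFun hb hx]

lemma orbitFlow_neg_one (hb : b < g b) (hx : x ∈ g.orbitHull b) :
    g.orbitFlow b (-1) x = g.symm x := by
  rw [g.eq_symm_apply, orbitFlow, ← orbitChart_add_one, neg_add_cancel_right,
    orbitChart_invFun hb hx]

lemma orbitFlow_strictMonoOn (hb : b < g b) (s : K) :
    StrictMonoOn (g.orbitFlow b s) (g.orbitHull b) := by
  intro x hx y hy hxy
  have hmono := orbitChart_strictMono hb
  rw [← orbitChart_invFun hb hx, ← orbitChart_invFun hb hy, hmono.lt_iff_lt] at hxy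
  exact hmono (by linarith)

lemma orbitFlowAt_mem (hx : x < g x) (s : K) : g.orbitFlowAt s x ∈ g.orbitHull x :=
  orbitHull_eq_of_mem (g.orbitBase_mem x) ▸ orbitFlow_mem (orbitBase_lt_apply hx) s x

lemma orbitFlowAt_orbitFlowAt (hx : x < g x) (s s' : K) :
    g.orbitFlowAt s (g.orbitFlowAt s' x) = g.orbitFlowAt (s' + s) x := by
  rw [orbitFlowAt, orbitBase_eq_of_mem (orbitFlowAt_mem hx s')]
  exact orbitFlow_orbitFlow (orbitBase_lt_apply hx) s s' x

lemma orbitFlowAt_one (hx : x < g x) : g.orbitFlowAt 1 x = g x :=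
  orbitFlow_one (orbitBase_lt_apply hx) (g.mem_orbitHull_orbitBase x)

lemma orbitFlowAt_neg_one (hx : x < g x) : g.orbitFlowAt (-1) x = g.symm x :=
  orbitFlow_neg_one (orbitBase_lt_apply hx) (g.mem_orbitHull_orbitBase x)

lemma orbitFlowAt_strictMonoOn (hx : x < g x) (s : K) :
    StrictMonoOn (g.orbitFlowAt s) (g.orbitHull x) := by
  have hmono := orbitFlow_strictMonoOn (orbitBase_lt_apply hx) s
  rw [orbitHull_eq_of_mem (g.orbitBase_mem x)] at hmono
  refine hmono.congr fun y hy => ?_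
  rw [orbitFlowAt, orbitBase_eq_of_mem hy]

lemma sqrtFun_mem (h : K ≃o K) (x : K) : h.sqrtFun x ∈ h.orbitHull x := by
  rcases lt_trichotomy x (h x) with hx | hx | hx
  · rw [sqrtFun_of_lt hx]
    exact orbitFlowAt_mem hx _
  · rw [sqrtFun_of_eq hx.symm]
    exact h.mem_orbitHull_self x
  · rw [sqrtFun_of_gt hx, ← orbitHull_inv]
    exact orbitFlowAt_mem (lt_inv_apply_iff.2 hx) _

lemma sqrtFun_sqrtFun (h : K ≃o K) (x : K) : h.sqrtFun (h.sqrtFun x) = h x := by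
  rcases lt_trichotomy x (h x) with hx | hx | hx
  · have hy := lt_apply_of_mem_orbitHull hx (orbitFlowAt_mem hx (1 / 2))
    rw [sqrtFun_of_lt hx, sqrtFun_of_lt hy, orbitFlowAt_orbitFlowAt hx, add_halves,
      orbitFlowAt_one hx]
  · rw [sqrtFun_of_eq hx.symm, sqrtFun_of_eq hx.symm, ← hx]
  · have hx' : x < h⁻¹ x := lt_inv_apply_iff.2 hx
    have hy := lt_apply_of_mem_orbitHull hx' (orbitFlowAt_mem hx' (-(1 / 2)))
    rw [sqrtFun_of_gt hx, sqrtFun_of_gt (lt_inv_apply_iff.1 hy), orbitFlowAt_orbitFlowAt hx',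
      ← neg_add, add_halves, orbitFlowAt_neg_one hx']
    rfl

lemma strictMonoOn_sqrtFun (h : K ≃o K) (x : K) : StrictMonoOn h.sqrtFun (h.orbitHull x) := by
  rcases lt_trichotomy x (h x) with hx | hx | hx
  · exact (orbitFlowAt_strictMonoOn hx _).congr fun y hy =>
      (sqrtFun_of_lt (lt_apply_of_mem_orbitHull hx hy)).symm
  · rw [orbitHull_eq_singleton hx.symm]
    exact subsingleton_singleton.strictMonoOn _
  · have hx' : x < h⁻¹ x := lt_inv_apply_iff.2 hx
    rw [← orbitHull_inv]
    exact (orbitFlowAt_strictMonoOn hx' _).congr fun y hy =>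
      (sqrtFun_of_gt (lt_inv_apply_iff.1 (lt_apply_of_mem_orbitHull hx' hy))).symm

lemma strictMono_sqrtFun (h : K ≃o K) : StrictMono h.sqrtFun :=
  strictMono_of_strictMonoOn_blocks h.orbitHull h.mem_orbitHull_self
    (fun _ _ => orbitHull_eq_of_mem) h.ordConnected_orbitHull h.sqrtFun_mem
    h.strictMonoOn_sqrtFun

lemma surjective_sqrtFun (h : K ≃o K) : Function.Surjective h.sqrtFun :=
  Function.Surjective.of_comp (g := h.sqrtFun) fun y =>
    ⟨h.symm y, by rw [Function.comp_apply, sqrtFun_sqrtFun, apply_symm_apply]⟩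

noncomputable def sqrt (h : K ≃o K) : K ≃o K :=
  h.strictMono_sqrtFun.orderIsoOfSurjective _ h.surjective_sqrtFun

theorem sqrt_trans_sqrt (h : K ≃o K) : h.sqrt.trans h.sqrt = h :=
  ext <| funext h.sqrtFun_sqrtFun

end Field

end OrderIso

/-- Orientation-preserving homeomorphisms of `ℝ` are exactly its order automorphisms. -/
theorem square_root_exists (h : ℝ ≃o ℝ) : ∃ ψ : ℝ ≃o ℝ, ψ.trans ψ = h :=
  ⟨h.sqrt, h.sqrt_trans_sqrt⟩
end

section
/- Let ψ, φ₁, φ₂ ∈ Homeo₊(ℝ). If ψ is a weak conjugation from φ₁ to φ₂ that is strong on an interval I (i.e., ψφ₁(x) = φ₂ψ(x) for all x ∈ I), then there exists a conjugation ψ̄ from φ₁ to φ₂ (ψ̄φ₁ψ̄⁻¹ = φ₂) such that ψ̄ agrees with ψ on I ∪ φ₁(I) and on Fix(φ₁). -/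
/-!
Off `Fix φ₁` the line splits into open intervals (components) on which `φ₁` moves every point the
same way, and the weak conjugation `ψ` carries each of them into the matching component for `φ₂`.
On a component where `φ₁` moves points up, choose a base point `c` (in `I` if the component meets
`I`). Any order isomorphism `g` with `g (φ₁ c) = φ₂ (g c)` extends from the fundamental domain
`[c, φ₁ c)` to the conjugacy `x ↦ φ₂⁻ⁿ (g (φ₁ⁿ x))` of the component onto its image, `n` being the
index with `φ₁ⁿ x ∈ [c, φ₁ c)`. Take `g = ψ` when `c ∈ I` (strongness gives the gluing condition)
and an affine map otherwise. Because `I` is an interval, the orbit segment from a point of `I` to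
the fundamental domain stays in `I`, so the extension agrees with `ψ` on `I`, and by equivariance on
`φ₁ I`. Components where `φ₁` moves points down are treated through `φ₁⁻¹`, `φ₂⁻¹` and `φ₁ I`, and on
`Fix φ₁` we keep `ψ`. The pieces are strictly monotone, onto the matching components, and separated
by fixed points, so together they form an order automorphism.
-/

open Set

namespace WeakConjPromotion

instance {α : Type*} [LE α] : IsOneApplyEqSelf (α ≃o α) α where one_apply_eq_self _ := rfl

instance {α : Type*} [LE α] : IsMulApplyEqComp (α ≃o α) α where mul_apply_eq_comp _ _ _ := rfl

section Orbit

variable {α : Type*}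

section LE

variable [LE α] {φ : α ≃o α} {x : α}

theorem zpow_apply_comm (φ : α ≃o α) (n : ℤ) (x : α) : (φ ^ n) (φ x) = φ ((φ ^ n) x) :=
  congrArg (· x) ((Commute.refl φ).zpow_left n).eq

theorem zpow_add_one_apply (φ : α ≃o α) (n : ℤ) (x : α) :
    (φ ^ (n + 1)) x = φ ((φ ^ n) x) := by
  rw [zpow_add_one, RelIso.mul_apply, zpow_apply_comm]

theorem zpow_neg_apply_zpow_apply (φ : α ≃o α) (n : ℤ) (x : α) :
    (φ ^ (-n)) ((φ ^ n) x) = x := by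
  rw [zpow_neg, RelIso.inv_apply_self]

theorem zpow_apply_zpow_neg_apply (φ : α ≃o α) (n : ℤ) (x : α) :
    (φ ^ n) ((φ ^ (-n)) x) = x := by
  rw [zpow_neg, RelIso.apply_inv_self]

theorem inv_apply_eq_iff : φ⁻¹ x = x ↔ φ x = x := φ.symm_apply_eq.trans eq_comm

end LE

variable [Preorder α] {φ : α ≃o α} {c x y : α} {m n k : ℤ}

theorem lt_inv_apply_iff : x < φ⁻¹ x ↔ φ x < x := φ.lt_symm_apply

theorem inv_apply_lt_iff : φ⁻¹ x < x ↔ x < φ x := φ.symm_apply_lt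

theorem zpow_apply_strictMono (hx : x < φ x) : StrictMono fun n : ℤ => (φ ^ n) x :=
  strictMono_int_of_lt_succ fun n => by
    simpa only [zpow_add_one, RelIso.mul_apply] using (φ ^ n).strictMono hx

theorem lt_apply_of_zpow_apply_mem_Ico (h : (φ ^ n) x ∈ Ico c (φ c)) : x < φ x := by
  have : (φ ^ n) x < (φ ^ n) (φ x) := by
    rw [zpow_apply_comm]; exact h.2.trans_le (φ.monotone h.1)
  exact (φ ^ n).lt_iff_lt.1 this

theorem zpow_apply_lt_of_lt (h : (φ ^ n) x ∈ Ico c (φ c)) (hk : k < n) : (φ ^ k) x < c := by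
  have : (φ ^ (k + 1)) x ≤ (φ ^ n) x :=
    (zpow_apply_strictMono (lt_apply_of_zpow_apply_mem_Ico h)).monotone (by omega)
  rw [zpow_add_one_apply] at this
  exact φ.lt_iff_lt.1 (this.trans_lt h.2)

theorem apply_le_zpow_apply_of_lt (h : (φ ^ n) x ∈ Ico c (φ c)) (hk : n < k) :
    φ c ≤ (φ ^ k) x := by
  have : (φ ^ (n + 1)) x ≤ (φ ^ k) x :=
    (zpow_apply_strictMono (lt_apply_of_zpow_apply_mem_Ico h)).monotone (by omega)
  rw [zpow_add_one_apply] at this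
  exact (φ.monotone h.1).trans this

theorem lt_of_zpow_apply_mem_Ico (hx : (φ ^ n) x ∈ Ico c (φ c)) (hy : (φ ^ m) y ∈ Ico c (φ c))
    (h : m < n) : x < y :=
  (φ ^ m).lt_iff_lt.1 ((zpow_apply_lt_of_lt hx h).trans_le hy.1)

/-- The `n` with `(φ ^ n) x ∈ Ico c (φ c)`, unique if it exists. -/
noncomputable def orbitIndex (φ : α ≃o α) (c x : α) : ℤ :=
  Classical.epsilon fun n : ℤ => (φ ^ n) x ∈ Ico c (φ c)

theorem orbitIndex_eq (h : (φ ^ n) x ∈ Ico c (φ c)) : orbitIndex φ c x = n := by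
  have hspec : (φ ^ orbitIndex φ c x) x ∈ Ico c (φ c) :=
    Classical.epsilon_spec (p := fun n : ℤ => (φ ^ n) x ∈ Ico c (φ c)) ⟨n, h⟩
  rcases lt_trichotomy (orbitIndex φ c x) n with hlt | heq | hgt
  · exact absurd h.2 (apply_le_zpow_apply_of_lt hspec hlt).not_gt
  · exact heq
  · exact absurd h.1 (zpow_apply_lt_of_lt hspec hgt).not_ge

/-- Extends `f` from the fundamental domain `[c, φ₁ c)` along `φ₁`-orbits so as to intertwine `φ₁`
with `φ₂`. -/
noncomputable def orbitExtend (φ₁ φ₂ f : α ≃o α) (c x : α) : α :=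
  (φ₂ ^ (-orbitIndex φ₁ c x) * f * φ₁ ^ orbitIndex φ₁ c x) x

section OrbitExtend

variable {φ₁ φ₂ f : α ≃o α}

theorem orbitExtend_eq (h : (φ₁ ^ n) x ∈ Ico c (φ₁ c)) :
    orbitExtend φ₁ φ₂ f c x = (φ₂ ^ (-n) * f * φ₁ ^ n) x := by
  rw [orbitExtend, orbitIndex_eq h]

theorem orbitExtend_apply_apply (h : (φ₁ ^ n) x ∈ Ico c (φ₁ c)) :
    orbitExtend φ₁ φ₂ f c (φ₁ x) = φ₂ (orbitExtend φ₁ φ₂ f c x) := by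
  have h' : (φ₁ ^ (n - 1)) (φ₁ x) ∈ Ico c (φ₁ c) := by
    rwa [← RelIso.mul_apply, ← zpow_add_one, sub_add_cancel]
  rw [orbitExtend_eq h', orbitExtend_eq h]
  exact congrArg (· x)
    (show φ₂ ^ (-(n - 1)) * f * φ₁ ^ (n - 1) * φ₁ = φ₂ * (φ₂ ^ (-n) * f * φ₁ ^ n) by group)

theorem zpow_apply_orbitExtend_mem_Ico (hf : f (φ₁ c) = φ₂ (f c))
    (h : (φ₁ ^ n) x ∈ Ico c (φ₁ c)) :
    (φ₂ ^ n) (orbitExtend φ₁ φ₂ f c x) ∈ Ico (f c) (φ₂ (f c)) := by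
  rw [orbitExtend_eq h, RelIso.mul_apply, RelIso.mul_apply, zpow_apply_zpow_neg_apply, ← hf]
  exact ⟨f.monotone h.1, f.strictMono h.2⟩

theorem orbitExtend_lt_orbitExtend (hf : f (φ₁ c) = φ₂ (f c))
    (hx : (φ₁ ^ n) x ∈ Ico c (φ₁ c)) (hy : (φ₁ ^ m) y ∈ Ico c (φ₁ c)) (hxy : x < y) :
    orbitExtend φ₁ φ₂ f c x < orbitExtend φ₁ φ₂ f c y := by
  rcases lt_trichotomy m n with hmn | rfl | hnm
  · exact lt_of_zpow_apply_mem_Ico (zpow_apply_orbitExtend_mem_Ico hf hx)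
      (zpow_apply_orbitExtend_mem_Ico hf hy) hmn
  · rw [orbitExtend_eq hx, orbitExtend_eq hy]
    exact (φ₂ ^ (-m) * f * φ₁ ^ m).strictMono hxy
  · exact absurd (lt_of_zpow_apply_mem_Ico hy hx hnm) hxy.not_gt

end OrbitExtend

def IsStrongOn (ψ φ₁ φ₂ : α ≃o α) (I : Set α) : Prop := ∀ x ∈ I, ψ (φ₁ x) = φ₂ (ψ x)

section IsStrongOn

variable {ψ φ₁ φ₂ : α ≃o α} {I : Set α}

theorem IsStrongOn.inv (hs : IsStrongOn ψ φ₁ φ₂ I) : IsStrongOn ψ φ₁⁻¹ φ₂⁻¹ (φ₁ '' I) := by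
  rintro _ ⟨u, hu, rfl⟩
  rw [RelIso.inv_apply_self, hs u hu, RelIso.inv_apply_self]

theorem IsStrongOn.apply_pow_apply (hs : IsStrongOn ψ φ₁ φ₂ I) {k : ℕ}
    (h : ∀ j < k, (φ₁ ^ j) x ∈ I) : ψ ((φ₁ ^ k) x) = (φ₂ ^ k) (ψ x) := by
  induction k with
  | zero => rfl
  | succ k ih =>
    rw [pow_succ', RelIso.mul_apply, hs _ (h k k.lt_succ_self),
      ih fun j hj => h j (hj.trans k.lt_succ_self), ← RelIso.mul_apply, ← pow_succ']

theorem IsStrongOn.apply_zpow_apply (hs : IsStrongOn ψ φ₁ φ₂ I) (hI : I.OrdConnected)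
    (hcI : c ∈ I) (hxI : x ∈ I) (h : (φ₁ ^ n) x ∈ Ico c (φ₁ c)) :
    ψ ((φ₁ ^ n) x) = (φ₂ ^ n) (ψ x) := by
  have hmono := (zpow_apply_strictMono (lt_apply_of_zpow_apply_mem_Ico h)).monotone
  obtain ⟨k, rfl | rfl⟩ := Int.eq_nat_or_neg n
  · -- the orbit segment `x, …, φ₁ ^ (k - 1) x` runs from `x` up to below `c`
    rw [zpow_natCast, zpow_natCast]
    refine hs.apply_pow_apply fun j hj => hI.out hxI hcI ⟨?_, ?_⟩ <;> rw [← zpow_natCast]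
    · exact hmono (Nat.cast_nonneg j)
    · exact (zpow_apply_lt_of_lt h (by exact_mod_cast hj)).le
  · -- the orbit segment `φ₁ ^ (-k) x, …, φ₁⁻¹ x` runs from above `c` up to `x`
    have hshift (j : ℕ) : (φ₁ ^ j) ((φ₁ ^ (-(k : ℤ))) x) = (φ₁ ^ (j - (k : ℤ))) x := by
      rw [← zpow_natCast, ← RelIso.mul_apply, ← zpow_add, sub_eq_add_neg]
    have key : ψ ((φ₁ ^ k) ((φ₁ ^ (-(k : ℤ))) x)) = (φ₂ ^ k) (ψ ((φ₁ ^ (-(k : ℤ))) x)) := by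
      refine hs.apply_pow_apply fun j hj => hI.out hcI hxI ⟨?_, ?_⟩ <;> rw [hshift]
      · exact h.1.trans (hmono (by omega))
      · exact hmono (show (j : ℤ) - k ≤ 0 by omega)
    rw [hshift, sub_self, zpow_zero, RelIso.one_apply, ← zpow_natCast] at key
    rw [key, zpow_neg_apply_zpow_apply]

end IsStrongOn

end Orbit

/-- Pointwise form of `ψ (Inc φ₁) = Inc φ₂` and `ψ (Dec φ₁) = Dec φ₂`. It follows from the paper's
conditions on `Fix` and `Inc` (`isWeakConj_of_image_eq`) and, unlike them, is symmetric under
inverting `φ₁` and `φ₂` (`IsWeakConj.inv`). -/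
def IsWeakConj {α : Type*} [Preorder α] (ψ φ₁ φ₂ : α ≃o α) : Prop :=
  ∀ x, (ψ x < φ₂ (ψ x) ↔ x < φ₁ x) ∧ (φ₂ (ψ x) < ψ x ↔ φ₁ x < x)

section IsWeakConj

variable {α : Type*} [LinearOrder α] {ψ φ₁ φ₂ : α ≃o α} {x : α}

theorem isWeakConj_of_image_eq (hFix : ψ '' {x | φ₁ x = x} = {x | φ₂ x = x})
    (hInc : ψ '' {x | φ₁ x > x} = {x | φ₂ x > x}) : IsWeakConj ψ φ₁ φ₂ := by
  intro x
  have hfix : ψ x = φ₂ (ψ x) ↔ x = φ₁ x := by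
    rw [eq_comm, eq_comm (a := x)]
    exact (Set.ext_iff.1 hFix (ψ x)).symm.trans ψ.injective.mem_set_image
  have hinc : ψ x < φ₂ (ψ x) ↔ x < φ₁ x :=
    (Set.ext_iff.1 hInc (ψ x)).symm.trans ψ.injective.mem_set_image
  refine ⟨hinc, ?_⟩
  rw [← not_le, ← not_le, le_iff_lt_or_eq, le_iff_lt_or_eq, hinc, hfix]

theorem IsWeakConj.inv (hw : IsWeakConj ψ φ₁ φ₂) : IsWeakConj ψ φ₁⁻¹ φ₂⁻¹ := fun x => by
  rw [lt_inv_apply_iff, lt_inv_apply_iff, inv_apply_lt_iff, inv_apply_lt_iff]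
  exact (hw x).symm

theorem IsWeakConj.apply_eq_iff (hw : IsWeakConj ψ φ₁ φ₂) : φ₂ (ψ x) = ψ x ↔ φ₁ x = x := by
  rw [← not_iff_not, ← ne_eq, ← ne_eq, ne_iff_lt_or_gt, ne_iff_lt_or_gt, (hw x).1, (hw x).2]

end IsWeakConj

section MovingComponent

variable {α : Type*} [LE α] [TopologicalSpace α] {φ : α ≃o α} {x y : α}

def movingComponent (φ : α ≃o α) (x : α) : Set α := connectedComponentIn {y | φ y ≠ y} x

theorem mem_movingComponent_self (hx : φ x ≠ x) : x ∈ movingComponent φ x :=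
  mem_connectedComponentIn hx

theorem mem_movingComponent_self_of_mem (hy : y ∈ movingComponent φ x) :
    x ∈ movingComponent φ x :=
  mem_connectedComponentIn (connectedComponentIn_nonempty_iff.1 ⟨y, hy⟩)

theorem apply_ne_of_mem_movingComponent (hy : y ∈ movingComponent φ x) : φ y ≠ y :=
  connectedComponentIn_subset _ _ hy

theorem movingComponent_eq (hy : y ∈ movingComponent φ x) :
    movingComponent φ y = movingComponent φ x :=
  (connectedComponentIn_eq hy).symm

theorem movingComponent_inv : movingComponent φ⁻¹ x = movingComponent φ x := by
  simp only [movingComponent, ne_eq, inv_apply_eq_iff]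

end MovingComponent

variable {α : Type*} [ConditionallyCompleteLinearOrder α] [TopologicalSpace α] [OrderTopology α]

section Escape

variable {f : α → α} {φ : α ≃o α} {x z : α}

theorem exists_iterate_gt (hf : Monotone f) (hfc : Continuous f) (hx : x ≤ f x)
    (hfix : ∀ y ∈ Icc x z, f y ≠ y) : ∃ n, z < f^[n] x := by
  by_contra! h
  have hbdd : BddAbove (range fun n => f^[n] x) := ⟨z, forall_mem_range.2 h⟩
  have hlim := tendsto_atTop_ciSup (hf.monotone_iterate_of_le_map hx) hbdd
  exact hfix _ ⟨le_ciSup hbdd 0, ciSup_le h⟩ (isFixedPt_of_tendsto_iterate hlim hfc.continuousAt)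

theorem exists_iterate_lt (hf : Monotone f) (hfc : Continuous f) (hx : f x ≤ x)
    (hfix : ∀ y ∈ Icc z x, f y ≠ y) : ∃ n, f^[n] x < z :=
  exists_iterate_gt (α := αᵒᵈ) hf.dual hfc hx fun y hy => hfix y ⟨hy.2, hy.1⟩

theorem exists_zpow_apply_gt (hx : x < φ x) (hfix : ∀ y ∈ Icc x z, φ y ≠ y) :
    ∃ n : ℤ, z < (φ ^ n) x :=
  let ⟨n, hn⟩ := exists_iterate_gt φ.monotone φ.continuous hx.le hfix
  ⟨n, by rwa [zpow_natCast, pow_apply_eq_iterate]⟩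

theorem exists_zpow_apply_lt (hx : x < φ x) (hfix : ∀ y ∈ Icc z x, φ y ≠ y) :
    ∃ n : ℤ, (φ ^ n) x < z :=
  let ⟨n, hn⟩ := exists_iterate_lt φ⁻¹.monotone φ⁻¹.continuous (inv_apply_lt_iff.2 hx).le
    fun y hy => mt inv_apply_eq_iff.1 (hfix y hy)
  ⟨-n, by rwa [zpow_neg, zpow_natCast, ← inv_pow, pow_apply_eq_iterate]⟩

end Escape

section MovingComponent

variable {φ : α ≃o α} {c x y z : α}

theorem ordConnected_movingComponent : (movingComponent φ x).OrdConnected :=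
  isPreconnected_connectedComponentIn.ordConnected

theorem lt_apply_of_mem_movingComponent (hx : x < φ x) (hy : y ∈ movingComponent φ x) :
    y < φ y := by
  have hsub : movingComponent φ x ⊆ {y | y < φ y} ∪ {y | φ y < y} := fun y hy =>
    (apply_ne_of_mem_movingComponent hy).symm.lt_or_gt
  exact isPreconnected_connectedComponentIn.subset_left_of_subset_union
    (isOpen_lt continuous_id φ.continuous) (isOpen_lt φ.continuous continuous_id)
    (disjoint_left.2 fun y h h' => lt_asymm h h') hsub
    ⟨x, mem_movingComponent_self hx.ne', hx⟩ hy

theorem lt_of_mem_movingComponent_of_lt (hy : y ∈ movingComponent φ x) (hz : φ z = z)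
    (hxz : x < z) : y < z :=
  not_le.1 fun hzy => apply_ne_of_mem_movingComponent (ordConnected_movingComponent.out
    (mem_movingComponent_self_of_mem hy) hy ⟨hxz.le, hzy⟩) hz

theorem lt_of_mem_movingComponent_of_gt (hy : y ∈ movingComponent φ x) (hz : φ z = z)
    (hzx : z < x) : z < y :=
  not_le.1 fun hyz => apply_ne_of_mem_movingComponent (ordConnected_movingComponent.out
    hy (mem_movingComponent_self_of_mem hy) ⟨hyz, hzx.le⟩) hz

theorem IsWeakConj.mapsTo_movingComponent {ψ φ₁ φ₂ : α ≃o α} (hw : IsWeakConj ψ φ₁ φ₂) :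
    MapsTo ψ (movingComponent φ₁ x) (movingComponent φ₂ (ψ x)) := fun _ hy =>
  (isPreconnected_connectedComponentIn.image _ ψ.continuous.continuousOn)
    |>.subset_connectedComponentIn (F := {y | φ₂ y ≠ y})
      (mem_image_of_mem _ (mem_movingComponent_self_of_mem hy))
      (image_subset_iff.2 fun _ hz => mt hw.apply_eq_iff.1 (apply_ne_of_mem_movingComponent hz))
      (mem_image_of_mem _ hy)

theorem exists_zpow_apply_mem_Ico (hc : c < φ c) (hx : x ∈ movingComponent φ c) :
    ∃ n : ℤ, (φ ^ n) x ∈ Ico c (φ c) := by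
  have hxφ := lt_apply_of_mem_movingComponent hc hx
  have hcc := mem_movingComponent_self hc.ne'
  have hfree {a b : α} (ha : a ∈ movingComponent φ c) (hb : b ∈ movingComponent φ c) :
      ∀ y ∈ Icc a b, φ y ≠ y := fun y hy =>
    apply_ne_of_mem_movingComponent (ordConnected_movingComponent.out ha hb hy)
  obtain ⟨m, hm⟩ := exists_zpow_apply_lt hxφ (hfree hcc hx)
  obtain ⟨k, hk, hmin⟩ := Int.exists_least_of_bdd (P := fun k => c ≤ (φ ^ k) x)
    ⟨m, fun k hk => not_lt.1 fun hkm =>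
      (hk.trans_lt ((zpow_apply_strictMono hxφ hkm).trans hm)).false⟩
    ((exists_zpow_apply_gt hxφ (hfree hx hcc)).imp fun _ h => h.le)
  have hk' : (φ ^ (k - 1)) x < c := not_le.1 fun h => by have := hmin _ h; omega
  refine ⟨k, hk, ?_⟩
  rw [← sub_add_cancel k 1, zpow_add_one_apply]
  exact φ.strictMono hk'

theorem zpow_orbitIndex_apply_mem_Ico (hc : c < φ c) (hx : x ∈ movingComponent φ c) :
    (φ ^ orbitIndex φ c x) x ∈ Ico c (φ c) :=
  Classical.epsilon_spec (p := fun n : ℤ => (φ ^ n) x ∈ Ico c (φ c))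
    (exists_zpow_apply_mem_Ico hc hx)

variable {φ₁ φ₂ f : α ≃o α}

theorem orbitExtend_strictMonoOn (hf : f (φ₁ c) = φ₂ (f c)) (hc : c < φ₁ c) :
    StrictMonoOn (orbitExtend φ₁ φ₂ f c) (movingComponent φ₁ c) := fun _ hx _ hy hxy =>
  orbitExtend_lt_orbitExtend hf (zpow_orbitIndex_apply_mem_Ico hc hx)
    (zpow_orbitIndex_apply_mem_Ico hc hy) hxy

variable [DenselyOrdered α]

theorem Icc_subset_movingComponent (hx : x < φ x) : Icc x (φ x) ⊆ movingComponent φ x := by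
  refine isPreconnected_Icc.subset_connectedComponentIn (left_mem_Icc.2 hx.le) ?_
  rintro y ⟨hxy, hyx⟩ (hy : φ y = y)
  obtain rfl : y = φ x := le_antisymm hyx (hy ▸ φ.monotone hxy)
  exact hx.ne' (φ.injective hy)

theorem apply_mem_movingComponent (hx : x < φ x) : φ x ∈ movingComponent φ x :=
  Icc_subset_movingComponent hx ⟨hx.le, le_rfl⟩

theorem zpow_apply_mem_movingComponent (hx : x < φ x) (hy : y ∈ movingComponent φ x) (n : ℤ) :
    (φ ^ n) y ∈ movingComponent φ x := by
  induction n using Int.induction_on with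
  | zero => exact hy
  | succ n ih =>
    rw [zpow_add_one_apply, ← movingComponent_eq ih]
    exact apply_mem_movingComponent (lt_apply_of_mem_movingComponent hx ih)
  | pred n ih =>
    set w := (φ ^ (-(n : ℤ) - 1)) y
    have hw : φ w = (φ ^ (-(n : ℤ))) y := by rw [← zpow_add_one_apply, sub_add_cancel]
    have hv := lt_apply_of_mem_movingComponent hx ih
    rw [← hw] at hv ih
    have hlt : w < φ w := φ.lt_iff_lt.1 hv
    rw [← movingComponent_eq ih, movingComponent_eq (apply_mem_movingComponent hlt)]
    exact mem_movingComponent_self hlt.ne'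

theorem orbitExtend_mapsTo (hf : f (φ₁ c) = φ₂ (f c)) (hc : c < φ₁ c) :
    MapsTo (orbitExtend φ₁ φ₂ f c) (movingComponent φ₁ c) (movingComponent φ₂ (f c)) := by
  intro x hx
  have hd : f c < φ₂ (f c) := hf ▸ f.strictMono hc
  have h := zpow_apply_orbitExtend_mem_Ico (φ₂ := φ₂) hf (zpow_orbitIndex_apply_mem_Ico hc hx)
  have := zpow_apply_mem_movingComponent hd
    (Icc_subset_movingComponent hd (Ico_subset_Icc_self h)) (-orbitIndex φ₁ c x)
  rwa [zpow_neg_apply_zpow_apply] at this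

theorem orbitExtend_surjOn (hf : f (φ₁ c) = φ₂ (f c)) (hc : c < φ₁ c) :
    SurjOn (orbitExtend φ₁ φ₂ f c) (movingComponent φ₁ c) (movingComponent φ₂ (f c)) := by
  intro w hw
  have hd : f c < φ₂ (f c) := hf ▸ f.strictMono hc
  set m := orbitIndex φ₂ (f c) w
  obtain ⟨t, ht, hft⟩ : (φ₂ ^ m) w ∈ f '' Ico c (φ₁ c) := by
    rw [f.image_Ico, hf]; exact zpow_orbitIndex_apply_mem_Ico hd hw
  have h : (φ₁ ^ m) ((φ₁ ^ (-m)) t) ∈ Ico c (φ₁ c) := by rwa [zpow_apply_zpow_neg_apply]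
  refine ⟨(φ₁ ^ (-m)) t, zpow_apply_mem_movingComponent hc
    (Icc_subset_movingComponent hc (Ico_subset_Icc_self ht)) _, ?_⟩
  rw [orbitExtend_eq h, RelIso.mul_apply, RelIso.mul_apply, zpow_apply_zpow_neg_apply, hft,
    zpow_neg_apply_zpow_apply]

end MovingComponent

theorem exists_orderIso_apply_eq {𝕜 : Type*} [Field 𝕜] [LinearOrder 𝕜] [IsStrictOrderedRing 𝕜]
    {a b a' b' : 𝕜} (h : a < b) (h' : a' < b') : ∃ g : 𝕜 ≃o 𝕜, g a = a' ∧ g b = b' :=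
  ⟨((OrderIso.addRight (-a)).trans (OrderIso.mulLeft₀ ((b' - a') / (b - a))
    (div_pos (sub_pos.2 h') (sub_pos.2 h)))).trans (OrderIso.addLeft a'), by simp, by
    simp [div_mul_cancel₀ _ (sub_ne_zero.2 h.ne'), ← sub_eq_add_neg]⟩

noncomputable def basePoint {α : Type*} [Nonempty α] (I S : Set α) : α :=
  Classical.epsilon fun c => c ∈ S ∧ ((S ∩ I).Nonempty → c ∈ I)

theorem basePoint_spec {α : Type*} [Nonempty α] {I S : Set α} (hS : S.Nonempty) :
    basePoint I S ∈ S ∧ ((S ∩ I).Nonempty → basePoint I S ∈ I) := by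
  refine Classical.epsilon_spec (p := fun c => c ∈ S ∧ ((S ∩ I).Nonempty → c ∈ I)) ?_
  by_cases h : (S ∩ I).Nonempty
  · exact ⟨h.some, h.some_mem.1, fun _ => h.some_mem.2⟩
  · exact ⟨hS.some, hS.some_mem, fun h' => absurd h' h⟩

open Classical in
noncomputable def gluingMap (ψ φ₁ φ₂ : ℝ ≃o ℝ) (I : Set ℝ) (c : ℝ) : ℝ ≃o ℝ :=
  if c ∈ I then ψ else Classical.epsilon fun g : ℝ ≃o ℝ => g c = ψ c ∧ g (φ₁ c) = φ₂ (ψ c)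

section Promotion

variable {ψ φ₁ φ₂ : ℝ ≃o ℝ} {I : Set ℝ} {c x y z : ℝ}

theorem gluingMap_of_mem (h : c ∈ I) : gluingMap ψ φ₁ φ₂ I c = ψ := if_pos h

theorem gluingMap_spec (hs : IsStrongOn ψ φ₁ φ₂ I) (hc : c < φ₁ c) (hψc : ψ c < φ₂ (ψ c)) :
    gluingMap ψ φ₁ φ₂ I c c = ψ c ∧ gluingMap ψ φ₁ φ₂ I c (φ₁ c) = φ₂ (ψ c) := by
  unfold gluingMap
  split_ifs with h
  · exact ⟨rfl, hs c h⟩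
  · exact Classical.epsilon_spec (p := fun g : ℝ ≃o ℝ => g c = ψ c ∧ g (φ₁ c) = φ₂ (ψ c))
      (exists_orderIso_apply_eq hc hψc)

/-- The conjugation on the component of `x` when `φ₁` moves it up, built from `ψ` on a fundamental
domain inside `I` if the component meets `I`. -/
noncomputable def incConj (ψ φ₁ φ₂ : ℝ ≃o ℝ) (I : Set ℝ) (x : ℝ) : ℝ :=
  orbitExtend φ₁ φ₂ (gluingMap ψ φ₁ φ₂ I (basePoint I (movingComponent φ₁ x)))
    (basePoint I (movingComponent φ₁ x)) x

theorem exists_incConj_eqOn_orbitExtend (hw : IsWeakConj ψ φ₁ φ₂) (hs : IsStrongOn ψ φ₁ φ₂ I)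
    (hx : x < φ₁ x) :
    ∃ (c : ℝ) (g : ℝ ≃o ℝ), c < φ₁ c ∧ g (φ₁ c) = φ₂ (g c) ∧
      movingComponent φ₁ c = movingComponent φ₁ x ∧
      movingComponent φ₂ (g c) = movingComponent φ₂ (ψ x) ∧
      EqOn (incConj ψ φ₁ φ₂ I) (orbitExtend φ₁ φ₂ g c) (movingComponent φ₁ x) := by
  set c := basePoint I (movingComponent φ₁ x)
  have hcx : c ∈ movingComponent φ₁ x := (basePoint_spec ⟨x, mem_movingComponent_self hx.ne'⟩).1
  have hc : c < φ₁ c := lt_apply_of_mem_movingComponent hx hcx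
  obtain ⟨hgc, hgφc⟩ := gluingMap_spec hs hc ((hw c).1.2 hc)
  refine ⟨c, gluingMap ψ φ₁ φ₂ I c, hc, hgc ▸ hgφc, movingComponent_eq hcx, ?_, fun y hy => ?_⟩
  · rw [hgc]; exact movingComponent_eq (hw.mapsTo_movingComponent hcx)
  · simp only [incConj, movingComponent_eq hy, c]

theorem incConj_apply_apply (hw : IsWeakConj ψ φ₁ φ₂) (hs : IsStrongOn ψ φ₁ φ₂ I)
    (hx : x < φ₁ x) : incConj ψ φ₁ φ₂ I (φ₁ x) = φ₂ (incConj ψ φ₁ φ₂ I x) := by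
  obtain ⟨c, g, hc, -, hC, -, heq⟩ := exists_incConj_eqOn_orbitExtend hw hs hx
  have hxC := mem_movingComponent_self hx.ne'
  rw [heq (apply_mem_movingComponent hx), heq hxC]
  exact orbitExtend_apply_apply (zpow_orbitIndex_apply_mem_Ico hc (hC ▸ hxC))

theorem incConj_strictMonoOn (hw : IsWeakConj ψ φ₁ φ₂) (hs : IsStrongOn ψ φ₁ φ₂ I)
    (hx : x < φ₁ x) : StrictMonoOn (incConj ψ φ₁ φ₂ I) (movingComponent φ₁ x) := by
  obtain ⟨c, g, hc, hg, hC, -, heq⟩ := exists_incConj_eqOn_orbitExtend hw hs hx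
  rw [← hC] at heq ⊢
  exact (orbitExtend_strictMonoOn hg hc).congr heq.symm

theorem incConj_mapsTo (hw : IsWeakConj ψ φ₁ φ₂) (hs : IsStrongOn ψ φ₁ φ₂ I) (hx : x < φ₁ x) :
    MapsTo (incConj ψ φ₁ φ₂ I) (movingComponent φ₁ x) (movingComponent φ₂ (ψ x)) := by
  obtain ⟨c, g, hc, hg, hC, hD, heq⟩ := exists_incConj_eqOn_orbitExtend hw hs hx
  rw [← hC] at heq ⊢
  rw [← hD]
  exact (orbitExtend_mapsTo hg hc).congr heq.symm

theorem incConj_surjOn (hw : IsWeakConj ψ φ₁ φ₂) (hs : IsStrongOn ψ φ₁ φ₂ I) (hx : x < φ₁ x) :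
    SurjOn (incConj ψ φ₁ φ₂ I) (movingComponent φ₁ x) (movingComponent φ₂ (ψ x)) := by
  obtain ⟨c, g, hc, hg, hC, hD, heq⟩ := exists_incConj_eqOn_orbitExtend hw hs hx
  rw [← hC] at heq ⊢
  rw [← hD]
  exact (orbitExtend_surjOn hg hc).congr heq.symm

theorem incConj_eq_of_mem (hs : IsStrongOn ψ φ₁ φ₂ I) (hI : I.OrdConnected) (hx : x < φ₁ x)
    (hxI : x ∈ I) : incConj ψ φ₁ φ₂ I x = ψ x := by
  have hxC := mem_movingComponent_self hx.ne'
  obtain ⟨hcx, hcI⟩ := basePoint_spec (I := I) ⟨x, hxC⟩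
  have hcI := hcI ⟨x, hxC, hxI⟩
  have h := zpow_orbitIndex_apply_mem_Ico (lt_apply_of_mem_movingComponent hx hcx)
    (movingComponent_eq hcx ▸ hxC)
  rw [incConj, gluingMap_of_mem hcI, orbitExtend_eq h, RelIso.mul_apply, RelIso.mul_apply,
    hs.apply_zpow_apply hI hcI hxI h, zpow_neg_apply_zpow_apply]

theorem incConj_eq_of_mem_union (hw : IsWeakConj ψ φ₁ φ₂) (hs : IsStrongOn ψ φ₁ φ₂ I)
    (hI : I.OrdConnected) (hx : x < φ₁ x) (hxI : x ∈ I ∪ φ₁ '' I) :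
    incConj ψ φ₁ φ₂ I x = ψ x := by
  rcases hxI with hxI | ⟨u, hu, rfl⟩
  · exact incConj_eq_of_mem hs hI hx hxI
  · have hu' : u < φ₁ u := φ₁.lt_iff_lt.1 hx
    rw [incConj_apply_apply hw hs hu', incConj_eq_of_mem hs hI hu' hu, hs u hu]

/-- Where `φ₁` moves points down, the construction is run for `φ₁⁻¹` and `φ₂⁻¹`, which `ψ`
intertwines on `φ₁ '' I`. -/
noncomputable def promotedConj (ψ φ₁ φ₂ : ℝ ≃o ℝ) (I : Set ℝ) (x : ℝ) : ℝ :=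
  if x < φ₁ x then incConj ψ φ₁ φ₂ I x
  else if φ₁ x < x then incConj ψ φ₁⁻¹ φ₂⁻¹ (φ₁ '' I) x
  else ψ x

theorem promotedConj_of_lt (hx : x < φ₁ x) : promotedConj ψ φ₁ φ₂ I x = incConj ψ φ₁ φ₂ I x :=
  if_pos hx

theorem promotedConj_of_gt (hx : φ₁ x < x) :
    promotedConj ψ φ₁ φ₂ I x = incConj ψ φ₁⁻¹ φ₂⁻¹ (φ₁ '' I) x := by
  rw [promotedConj, if_neg hx.not_gt, if_pos hx]

theorem promotedConj_of_eq (hx : φ₁ x = x) : promotedConj ψ φ₁ φ₂ I x = ψ x := by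
  rw [promotedConj, if_neg hx.not_gt, if_neg hx.not_lt]

theorem promotedConj_eqOn_of_lt (hx : x < φ₁ x) :
    EqOn (promotedConj ψ φ₁ φ₂ I) (incConj ψ φ₁ φ₂ I) (movingComponent φ₁ x) := fun _ hy =>
  promotedConj_of_lt (lt_apply_of_mem_movingComponent hx hy)

theorem promotedConj_eqOn_of_gt (hx : φ₁ x < x) :
    EqOn (promotedConj ψ φ₁ φ₂ I) (incConj ψ φ₁⁻¹ φ₂⁻¹ (φ₁ '' I)) (movingComponent φ₁ x) :=
  fun _ hy => promotedConj_of_gt <| lt_inv_apply_iff.1 <|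
    lt_apply_of_mem_movingComponent (lt_inv_apply_iff.2 hx) (by rwa [movingComponent_inv])

theorem promotedConj_apply_apply (hw : IsWeakConj ψ φ₁ φ₂) (hs : IsStrongOn ψ φ₁ φ₂ I) (x : ℝ) :
    promotedConj ψ φ₁ φ₂ I (φ₁ x) = φ₂ (promotedConj ψ φ₁ φ₂ I x) := by
  rcases lt_trichotomy x (φ₁ x) with hx | hx | hx
  · rw [promotedConj_of_lt (φ₁.strictMono hx), promotedConj_of_lt hx, incConj_apply_apply hw hs hx]
  · rw [← hx, promotedConj_of_eq hx.symm, hw.apply_eq_iff.2 hx.symm]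
  · have h := incConj_apply_apply hw.inv hs.inv (lt_inv_apply_iff.2 (φ₁.strictMono hx))
    rw [RelIso.inv_apply_self] at h
    rw [promotedConj_of_gt (φ₁.strictMono hx), promotedConj_of_gt hx, h, RelIso.apply_inv_self]

theorem promotedConj_strictMonoOn (hw : IsWeakConj ψ φ₁ φ₂) (hs : IsStrongOn ψ φ₁ φ₂ I)
    (hx : φ₁ x ≠ x) : StrictMonoOn (promotedConj ψ φ₁ φ₂ I) (movingComponent φ₁ x) := by
  rcases hx.lt_or_gt with hx | hx
  · have := incConj_strictMonoOn hw.inv hs.inv (lt_inv_apply_iff.2 hx)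
    rw [movingComponent_inv] at this
    exact this.congr (promotedConj_eqOn_of_gt hx).symm
  · exact (incConj_strictMonoOn hw hs hx).congr (promotedConj_eqOn_of_lt hx).symm

theorem promotedConj_mapsTo (hw : IsWeakConj ψ φ₁ φ₂) (hs : IsStrongOn ψ φ₁ φ₂ I)
    (hx : φ₁ x ≠ x) :
    MapsTo (promotedConj ψ φ₁ φ₂ I) (movingComponent φ₁ x) (movingComponent φ₂ (ψ x)) := by
  rcases hx.lt_or_gt with hx | hx
  · have := incConj_mapsTo hw.inv hs.inv (lt_inv_apply_iff.2 hx)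
    rw [movingComponent_inv, movingComponent_inv] at this
    exact this.congr (promotedConj_eqOn_of_gt hx).symm
  · exact (incConj_mapsTo hw hs hx).congr (promotedConj_eqOn_of_lt hx).symm

theorem promotedConj_surjOn (hw : IsWeakConj ψ φ₁ φ₂) (hs : IsStrongOn ψ φ₁ φ₂ I)
    (hx : φ₁ x ≠ x) :
    SurjOn (promotedConj ψ φ₁ φ₂ I) (movingComponent φ₁ x) (movingComponent φ₂ (ψ x)) := by
  rcases hx.lt_or_gt with hx | hx
  · have := incConj_surjOn hw.inv hs.inv (lt_inv_apply_iff.2 hx)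
    rw [movingComponent_inv, movingComponent_inv] at this
    exact this.congr (promotedConj_eqOn_of_gt hx).symm
  · exact (incConj_surjOn hw hs hx).congr (promotedConj_eqOn_of_lt hx).symm

theorem promotedConj_lt_of_fixed (hw : IsWeakConj ψ φ₁ φ₂) (hs : IsStrongOn ψ φ₁ φ₂ I)
    (hz : φ₁ z = z) (hxz : x < z) : promotedConj ψ φ₁ φ₂ I x < promotedConj ψ φ₁ φ₂ I z := by
  rw [promotedConj_of_eq hz]
  by_cases hx : φ₁ x = x
  · rw [promotedConj_of_eq hx]; exact ψ.strictMono hxz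
  · exact lt_of_mem_movingComponent_of_lt (promotedConj_mapsTo hw hs hx
      (mem_movingComponent_self hx)) (hw.apply_eq_iff.2 hz) (ψ.strictMono hxz)

theorem promotedConj_gt_of_fixed (hw : IsWeakConj ψ φ₁ φ₂) (hs : IsStrongOn ψ φ₁ φ₂ I)
    (hz : φ₁ z = z) (hzy : z < y) : promotedConj ψ φ₁ φ₂ I z < promotedConj ψ φ₁ φ₂ I y := by
  rw [promotedConj_of_eq hz]
  by_cases hy : φ₁ y = y
  · rw [promotedConj_of_eq hy]; exact ψ.strictMono hzy
  · exact lt_of_mem_movingComponent_of_gt (promotedConj_mapsTo hw hs hy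
      (mem_movingComponent_self hy)) (hw.apply_eq_iff.2 hz) (ψ.strictMono hzy)

theorem promotedConj_strictMono (hw : IsWeakConj ψ φ₁ φ₂) (hs : IsStrongOn ψ φ₁ φ₂ I) :
    StrictMono (promotedConj ψ φ₁ φ₂ I) := by
  intro x y hxy
  by_cases h : ∀ z ∈ Icc x y, φ₁ z ≠ z
  · have hy : y ∈ movingComponent φ₁ x := isPreconnected_Icc.subset_connectedComponentIn
      (left_mem_Icc.2 hxy.le) h (right_mem_Icc.2 hxy.le)
    exact promotedConj_strictMonoOn hw hs (h x (left_mem_Icc.2 hxy.le))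
      (mem_movingComponent_self_of_mem hy) hy hxy
  · simp only [not_forall, not_not] at h
    obtain ⟨z, ⟨hxz, hzy⟩, hz⟩ := h
    rcases hxz.eq_or_lt with rfl | hxz
    · exact promotedConj_gt_of_fixed hw hs hz hxy
    · refine (promotedConj_lt_of_fixed hw hs hz hxz).trans_le ?_
      rcases hzy.eq_or_lt with rfl | hzy
      exacts [le_rfl, (promotedConj_gt_of_fixed hw hs hz hzy).le]

theorem promotedConj_surjective (hw : IsWeakConj ψ φ₁ φ₂) (hs : IsStrongOn ψ φ₁ φ₂ I) :
    Function.Surjective (promotedConj ψ φ₁ φ₂ I) := by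
  intro w
  obtain ⟨x, rfl⟩ := ψ.surjective w
  by_cases hx : φ₁ x = x
  · exact ⟨x, promotedConj_of_eq hx⟩
  · obtain ⟨y, -, hy⟩ := promotedConj_surjOn hw hs hx
      (mem_movingComponent_self (mt hw.apply_eq_iff.1 hx))
    exact ⟨y, hy⟩

theorem promotedConj_eq_of_mem (hw : IsWeakConj ψ φ₁ φ₂) (hs : IsStrongOn ψ φ₁ φ₂ I)
    (hI : I.OrdConnected) (hx : x ∈ I ∪ φ₁ '' I) : promotedConj ψ φ₁ φ₂ I x = ψ x := by
  rcases lt_trichotomy x (φ₁ x) with h | h | h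
  · rw [promotedConj_of_lt h]; exact incConj_eq_of_mem_union hw hs hI h hx
  · exact promotedConj_of_eq h.symm
  · have hI' : (φ₁ '' I).OrdConnected := by
      rw [OrderIso.image_eq_preimage_symm]; exact hI.preimage_mono φ₁.symm.monotone
    rw [promotedConj_of_gt h]
    refine incConj_eq_of_mem_union hw.inv hs.inv hI' (lt_inv_apply_iff.2 h) ?_
    have hI'' : ⇑φ₁⁻¹ '' (φ₁ '' I) = I := φ₁.symm_image_image I
    rwa [hI'', union_comm]

end Promotion

end WeakConjPromotion

/-- Lemma 2.7 of [ABR]: a weak conjugation ψ from φ₁ to φ₂ that is strong on an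
interval I can be promoted to a true conjugation ψ̄ from φ₁ to φ₂ agreeing with
ψ on I ∪ φ₁(I) and on Fix(φ₁). -/
theorem weak_conj_promotion (ψ φ₁ φ₂ : ℝ ≃o ℝ) (I : Set ℝ) (hI : I.OrdConnected)
    (hFix : ψ '' {x | φ₁ x = x} = {x | φ₂ x = x})
    (hInc : ψ '' {x | φ₁ x > x} = {x | φ₂ x > x})
    (hstrong : ∀ x ∈ I, ψ (φ₁ x) = φ₂ (ψ x)) :
    ∃ ψbar : ℝ ≃o ℝ,
      (∀ x : ℝ, ψbar (φ₁ x) = φ₂ (ψbar x)) ∧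
      (∀ x ∈ I ∪ φ₁ '' I, ψbar x = ψ x) ∧
      (∀ x : ℝ, φ₁ x = x → ψbar x = ψ x) := by
  open WeakConjPromotion in
  have hw := isWeakConj_of_image_eq hFix hInc
  exact ⟨StrictMono.orderIsoOfSurjective _ (promotedConj_strictMono hw hstrong)
      (promotedConj_surjective hw hstrong),
    promotedConj_apply_apply hw hstrong,
    fun x hx => promotedConj_eq_of_mem hw hstrong hI hx,
    fun x hx => promotedConj_of_eq hx⟩
end

section
/- For any nontrivial reduced word w in the free group F_n (n ≥ 1) and any orientation-preserving homeomorphism g of ℝ, there exists a group homomorphism ρ : F_n → Homeo₊(ℝ) with ρ(w) = g. In other words, the word map ρ ↦ ρ(w) from Rep(F_n, Homeo₊(ℝ)) to Homeo₊(ℝ) is surjective for every nontrivial w. -/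
/-!
Let `w` be cyclically reduced of length `L` and read `⋯ w w w ⋯` as a bi-infinite word indexed
by `ℤ`. Let a generator `x` send `t + 1` to `t` whenever the letter at position `t` is `x`, and
`t` to `t + 1` whenever it is `x⁻¹`. Because no two cyclically adjacent letters cancel, these
partial maps of `ℤ` are increasing, so they extend to homeomorphisms of `ℝ`; for the resulting
representation `ρ`, `ρ w` maps `L (q + 1)` to `L q`, so it has no fixed point. Two homeomorphisms
pushing every point down are conjugate, and a value of the word map stays one after conjugating
`w` or `ρ w`; this settles every fixed-point-free `g` (using `w⁻¹` for those pushing points up).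

A general `g` is first moved into `(-1, 1)` and extended by the identity, so that its fixed
points are unbounded in both directions. On each bounded gap of the fixed-point set it is
fixed-point free; the representations found there are glued together, and the result is
restricted back to `(-1, 1)`.
-/

open Set Function

namespace OrderIso

variable {α β : Type*}

section Preorder

variable [Preorder α] [Preorder β]

def restrict (f : α ≃o β) (s : Set α) (t : Set β) (h : ∀ x, f x ∈ t ↔ x ∈ s) : s ≃o t where
  toEquiv := f.toEquiv.subtypeEquiv fun x => (h x).symm
  map_rel_iff' := f.le_iff_le

@[simp]
lemma coe_restrict_apply (f : α ≃o β) (s : Set α) (t : Set β) (h : ∀ x, f x ∈ t ↔ x ∈ s)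
    (x : s) : (f.restrict s t h x : β) = f x :=
  rfl

def autCongr (e : α ≃o β) : (α ≃o α) ≃* (β ≃o β) where
  toFun f := e.symm.trans (f.trans e)
  invFun f := e.trans (f.trans e.symm)
  left_inv f := by ext; simp
  right_inv f := by ext; simp
  map_mul' f g := by ext; simp [RelIso.mul_apply]

@[simp]
lemma autCongr_apply (e : α ≃o β) (f : α ≃o α) (x : β) : e.autCongr f x = e (f (e.symm x)) :=
  rfl

@[simp]
lemma autCongr_symm_apply (e : α ≃o β) (f : β ≃o β) (x : α) :
    e.autCongr.symm f x = e.symm (f (e x)) :=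
  rfl

def restrictHom {M : Type*} [Monoid M] (ρ : M →* α ≃o α) (s : Set α)
    (h : ∀ m x, ρ m x ∈ s ↔ x ∈ s) : M →* s ≃o s where
  toFun m := (ρ m).restrict s s (h m)
  map_one' := by ext; simp
  map_mul' m m' := by ext; simp [RelIso.mul_apply]

@[simp]
lemma restrictHom_apply {M : Type*} [Monoid M] (ρ : M →* α ≃o α) (s : Set α)
    (h : ∀ m x, ρ m x ∈ s ↔ x ∈ s) (m : M) : restrictHom ρ s h m = (ρ m).restrict s s (h m) :=
  rfl

lemma apply_mem_Ioo_iff (f : α ≃o α) {a b : α} (ha : IsFixedPt f a) (hb : IsFixedPt f b)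
    (x : α) : f x ∈ Ioo a b ↔ x ∈ Ioo a b := by
  conv_lhs => rw [← ha.eq, ← hb.eq, ← f.image_Ioo]
  exact f.injective.mem_set_image

end Preorder

section Glue

variable [LinearOrder α] {s : Set α}

lemma lt_apply_of_lt_of_notMem [s.OrdConnected] (f : s ≃o s) {x : s} {z : α} (hz : z ∉ s)
    (h : z < x) : z < f x := by
  by_contra! hle
  exact hz (Set.OrdConnected.out ‹_› (f x).2 x.2 ⟨hle, h.le⟩)

lemma apply_lt_of_lt_of_notMem [s.OrdConnected] (f : s ≃o s) {x : s} {z : α} (hz : z ∉ s)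
    (h : x < z) : f x < z := by
  by_contra! hle
  exact hz (Set.OrdConnected.out ‹_› x.2 (f x).2 ⟨h.le, hle⟩)

variable {ι : Type*} {I : ι → Set α}

open Classical in
noncomputable def glueFun (τ : ∀ i, I i ≃o I i) (x : α) : α :=
  if h : ∃ i, x ∈ I i then τ h.choose ⟨x, h.choose_spec⟩ else x

lemma glueFun_of_mem (hI : Pairwise (Disjoint on I)) (τ : ∀ i, I i ≃o I i) {i : ι} {x : α}
    (hx : x ∈ I i) : glueFun τ x = τ i ⟨x, hx⟩ := by
  have h : ∃ i, x ∈ I i := ⟨i, hx⟩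
  obtain rfl : h.choose = i := hI.eq (not_disjoint_iff.2 ⟨x, h.choose_spec, hx⟩)
  simp [glueFun, h]

lemma glueFun_of_forall_notMem (τ : ∀ i, I i ≃o I i) {x : α} (hx : ∀ i, x ∉ I i) :
    glueFun τ x = x := by
  simp [glueFun, hx]

lemma glueFun_mul (hI : Pairwise (Disjoint on I)) (τ σ : ∀ i, I i ≃o I i) (x : α) :
    glueFun (τ * σ) x = glueFun τ (glueFun σ x) := by
  by_cases hx : ∃ i, x ∈ I i
  · obtain ⟨i, hx⟩ := hx
    rw [glueFun_of_mem hI _ hx, glueFun_of_mem hI σ hx, glueFun_of_mem hI τ (σ i ⟨x, hx⟩).2]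
    rfl
  · rw [not_exists] at hx
    rw [glueFun_of_forall_notMem _ hx, glueFun_of_forall_notMem σ hx,
      glueFun_of_forall_notMem τ hx]

lemma glueFun_one (hI : Pairwise (Disjoint on I)) (x : α) :
    glueFun (1 : ∀ i, I i ≃o I i) x = x := by
  by_cases hx : ∃ i, x ∈ I i
  · obtain ⟨i, hx⟩ := hx
    rw [glueFun_of_mem hI _ hx]
    rfl
  · exact glueFun_of_forall_notMem _ (not_exists.1 hx)

lemma strictMono_glueFun (hI : Pairwise (Disjoint on I)) (hc : ∀ i, (I i).OrdConnected)
    (τ : ∀ i, I i ≃o I i) : StrictMono (glueFun τ) := by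
  intro x y hxy
  by_cases hx : ∃ i, x ∈ I i <;> by_cases hy : ∃ i, y ∈ I i
  · obtain ⟨i, hx⟩ := hx
    obtain ⟨j, hy⟩ := hy
    rw [glueFun_of_mem hI τ hx, glueFun_of_mem hI τ hy]
    by_cases hij : i = j
    · subst hij
      exact (τ i).strictMono (Subtype.mk_lt_mk.2 hxy)
    · have hyi : y ∉ I i := fun h => (hI hij).ne_of_mem h hy rfl
      have hxj : (τ i ⟨x, hx⟩ : α) ∉ I j := fun h => (hI hij).ne_of_mem (τ i _).2 h rfl
      exact lt_apply_of_lt_of_notMem (τ j) (x := ⟨y, hy⟩) hxj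
        (apply_lt_of_lt_of_notMem (τ i) (x := ⟨x, hx⟩) hyi hxy)
  · obtain ⟨i, hx⟩ := hx
    rw [not_exists] at hy
    rw [glueFun_of_mem hI τ hx, glueFun_of_forall_notMem τ hy]
    exact apply_lt_of_lt_of_notMem (τ i) (x := ⟨x, hx⟩) (hy i) hxy
  · rw [not_exists] at hx
    obtain ⟨j, hy⟩ := hy
    rw [glueFun_of_forall_notMem τ hx, glueFun_of_mem hI τ hy]
    exact lt_apply_of_lt_of_notMem (τ j) (x := ⟨y, hy⟩) (hx j) hxy
  · rw [not_exists] at hx hy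
    rwa [glueFun_of_forall_notMem τ hx, glueFun_of_forall_notMem τ hy]

noncomputable def glue (hI : Pairwise (Disjoint on I)) (hc : ∀ i, (I i).OrdConnected) :
    (∀ i, I i ≃o I i) →* α ≃o α where
  toFun τ := (strictMono_glueFun hI hc τ).orderIsoOfSurjective _ fun y =>
    ⟨glueFun τ⁻¹ y, by rw [← glueFun_mul hI, mul_inv_cancel, glueFun_one hI]⟩
  map_one' := by ext x; exact glueFun_one hI x
  map_mul' τ σ := by ext x; exact glueFun_mul hI τ σ x

lemma glue_apply_of_mem (hI : Pairwise (Disjoint on I)) (hc : ∀ i, (I i).OrdConnected)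
    (τ : ∀ i, I i ≃o I i) {i : ι} {x : α} (hx : x ∈ I i) : glue hI hc τ x = τ i ⟨x, hx⟩ :=
  glueFun_of_mem hI τ hx

lemma glue_apply_of_forall_notMem (hI : Pairwise (Disjoint on I))
    (hc : ∀ i, (I i).OrdConnected) (τ : ∀ i, I i ≃o I i) {x : α} (hx : ∀ i, x ∉ I i) :
    glue hI hc τ x = x :=
  glueFun_of_forall_notMem τ hx

end Glue

end OrderIso

section Blocks

variable {α β : Type*} [LinearOrder α] [LinearOrder β]

lemma StrictMono.exists_mem_Ico {u : ℤ → α} (hu : StrictMono u) (hbot : ¬BddBelow (range u))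
    (htop : ¬BddAbove (range u)) (x : α) : ∃ k, x ∈ Ico (u k) (u (k + 1)) := by
  obtain ⟨_, ⟨b, rfl⟩, hb⟩ := not_bddAbove_iff.1 htop x
  obtain ⟨_, ⟨a, rfl⟩, ha⟩ := not_bddBelow_iff.1 hbot x
  have hbdd : ∀ k, u k ≤ x → k ≤ b := fun k hk => (hu.lt_iff_lt.1 (hk.trans_lt hb)).le
  obtain ⟨k, hk, hmax⟩ := Int.exists_greatest_of_bdd ⟨b, hbdd⟩ ⟨a, ha.le⟩
  exact ⟨k, hk, not_le.1 fun h => absurd (hmax _ h) (by omega)⟩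

lemma StrictMono.eq_of_mem_Ico {u : ℤ → α} (hu : StrictMono u) {k l : ℤ} {x : α}
    (hk : x ∈ Ico (u k) (u (k + 1))) (hl : x ∈ Ico (u l) (u (l + 1))) : k = l := by
  have h₁ : k < l + 1 := hu.lt_iff_lt.1 (hk.1.trans_lt hl.2)
  have h₂ : l < k + 1 := hu.lt_iff_lt.1 (hl.1.trans_lt hk.2)
  omega

lemma exists_orderIso_eqOn_Icc {u : ℤ → α} {v : ℤ → β} (e : ℤ → α ≃o β) (hu : StrictMono u)
    (hv : StrictMono v) (hu_bot : ¬BddBelow (range u)) (hu_top : ¬BddAbove (range u))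
    (hv_bot : ¬BddBelow (range v)) (hv_top : ¬BddAbove (range v))
    (he : ∀ k, e k (u k) = v k) (he' : ∀ k, e k (u (k + 1)) = v (k + 1)) :
    ∃ F : α ≃o β, ∀ k, EqOn F (e k) (Icc (u k) (u (k + 1))) := by
  choose idx hidx using hu.exists_mem_Ico hu_bot hu_top
  have hidx_eq {k x} (hx : x ∈ Ico (u k) (u (k + 1))) : idx x = k := hu.eq_of_mem_Ico (hidx x) hx
  have hmono : StrictMono fun x => e (idx x) x := by
    intro x y hxy
    have hle : idx x ≤ idx y :=
      Int.lt_add_one_iff.1 (hu.lt_iff_lt.1 ((hidx x).1.trans_lt (hxy.trans (hidx y).2)))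
    rcases hle.eq_or_lt with h | h
    · simp only [h]
      exact (e _).strictMono hxy
    · calc e (idx x) x < e (idx x) (u (idx x + 1)) := (e _).strictMono (hidx x).2
        _ = v (idx x + 1) := he' _
        _ ≤ v (idx y) := hv.monotone (by omega)
        _ = e (idx y) (u (idx y)) := (he _).symm
        _ ≤ e (idx y) y := (e _).monotone (hidx y).1
  have hsurj : Surjective fun x => e (idx x) x := by
    intro y
    obtain ⟨k, hk⟩ := hv.exists_mem_Ico hv_bot hv_top y
    have hmem : (e k).symm y ∈ Ico (u k) (u (k + 1)) :=
      ⟨(e k).le_symm_apply.2 (he k ▸ hk.1), (e k).symm_apply_lt.2 (he' k ▸ hk.2)⟩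
    exact ⟨(e k).symm y, by simp [hidx_eq hmem]⟩
  refine ⟨hmono.orderIsoOfSurjective _ hsurj, fun k x hx => ?_⟩
  simp only [StrictMono.coe_orderIsoOfSurjective]
  rcases hx.2.lt_or_eq with h | rfl
  · rw [hidx_eq ⟨hx.1, h⟩]
  · rw [hidx_eq ⟨le_rfl, hu (lt_add_one _)⟩, he, he']

end Blocks

lemma exists_orderIso_apply_eq_apply_eq {a b a' b' : ℝ} (hab : a < b) (hab' : a' < b') :
    ∃ e : ℝ ≃o ℝ, e a = a' ∧ e b = b' := by
  let m := (b' - a') / (b - a)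
  have hm : 0 < m := div_pos (sub_pos.2 hab') (sub_pos.2 hab)
  refine ⟨((OrderIso.subRight a).trans (OrderIso.mulLeft₀ m hm)).trans (OrderIso.addLeft a'),
    by simp, ?_⟩
  simp [m, div_mul_cancel₀ _ (sub_ne_zero.2 hab.ne')]

lemma StrictMono.not_bddBelow_and_not_bddAbove_range_intCast {u : ℤ → ℤ} (hu : StrictMono u) :
    ¬BddBelow (range fun k => (u k : ℝ)) ∧ ¬BddAbove (range fun k => (u k : ℝ)) := by
  have hmono : Monotone fun k => u k - k :=
    monotone_int_of_le_succ fun k => by have := hu (lt_add_one k); omega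
  have hup (n : ℤ) : n ≤ u |n - u 0| := by
    have h₁ : u 0 - 0 ≤ u |n - u 0| - |n - u 0| := hmono (abs_nonneg _)
    have h₂ := le_abs_self (n - u 0)
    omega
  have hdown (n : ℤ) : u (-|n - u 0|) ≤ n := by
    have h₁ : u (-|n - u 0|) - -|n - u 0| ≤ u 0 - 0 := hmono (neg_nonpos.2 (abs_nonneg _))
    have h₂ := neg_abs_le (n - u 0)
    omega
  refine ⟨not_bddBelow_iff.2 fun x => ⟨_, ⟨-|⌊x⌋ - 1 - u 0|, rfl⟩, ?_⟩,
    not_bddAbove_iff.2 fun x => ⟨_, ⟨|⌈x⌉ + 1 - u 0|, rfl⟩, ?_⟩⟩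
  · calc (u (-|⌊x⌋ - 1 - u 0|) : ℝ) ≤ ⌊x⌋ - 1 := by exact_mod_cast hdown _
      _ < x := by linarith [Int.floor_le x]
  · calc x < ⌈x⌉ + 1 := (Int.le_ceil x).trans_lt (lt_add_one _)
      _ ≤ u |⌈x⌉ + 1 - u 0| := by exact_mod_cast hup _

lemma exists_orderIso_apply_intCast_eq {u v : ℤ → ℤ} (hu : StrictMono u) (hv : StrictMono v) :
    ∃ F : ℝ ≃o ℝ, ∀ k, F (u k) = v k := by
  have hu' : StrictMono fun k => (u k : ℝ) := fun _ _ h => Int.cast_lt.2 (hu h)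
  have hv' : StrictMono fun k => (v k : ℝ) := fun _ _ h => Int.cast_lt.2 (hv h)
  choose e he he' using fun k =>
    exists_orderIso_apply_eq_apply_eq (hu' (lt_add_one k)) (hv' (lt_add_one k))
  obtain ⟨hu_bot, hu_top⟩ := hu.not_bddBelow_and_not_bddAbove_range_intCast
  obtain ⟨hv_bot, hv_top⟩ := hv.not_bddBelow_and_not_bddAbove_range_intCast
  obtain ⟨F, hF⟩ := exists_orderIso_eqOn_Icc e hu' hv' hu_bot hu_top hv_bot hv_top he he'
  exact ⟨F, fun k => (hF k ⟨le_rfl, (hu' (lt_add_one k)).le⟩).trans (he k)⟩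

section Orbits

variable {α : Type*}

lemma OrderIso.zpow_add_one_apply_s4 [Preorder α] (h : α ≃o α) (k : ℤ) (x : α) :
    (h ^ (k + 1)) x = h ((h ^ k) x) := by
  rw [add_comm, zpow_one_add, RelIso.mul_apply]

lemma OrderIso.strictMono_zpow_apply_s4 [Preorder α] (h : α ≃o α) (hh : ∀ x, x < h x) (x₀ : α) :
    StrictMono fun k : ℤ => (h ^ k) x₀ :=
  strictMono_int_of_lt_succ fun k => by
    rw [zpow_add_one, RelIso.mul_apply]
    exact (h ^ k).strictMono (hh x₀)

lemma OrderIso.not_bddBelow_and_not_bddAbove_range_zpow_apply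
    [ConditionallyCompleteLinearOrder α] (h : α ≃o α) (hh : ∀ x, h x ≠ x) (x₀ : α) :
    ¬BddBelow (range fun k : ℤ => (h ^ k) x₀) ∧ ¬BddAbove (range fun k : ℤ => (h ^ k) x₀) := by
  set S := range fun k : ℤ => (h ^ k) x₀
  have hS : h '' S = S := by
    ext y
    simp only [S, mem_image, mem_range]
    refine ⟨?_, ?_⟩
    · rintro ⟨_, ⟨k, rfl⟩, rfl⟩
      exact ⟨k + 1, h.zpow_add_one_apply_s4 k x₀⟩
    · rintro ⟨k, rfl⟩
      exact ⟨_, ⟨k - 1, rfl⟩, by rw [← h.zpow_add_one_apply_s4, sub_add_cancel]⟩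
  have hne : S.Nonempty := range_nonempty _
  exact ⟨fun hb => hh _ (by rw [h.map_csInf' hne hb, hS]),
    fun hb => hh _ (by rw [h.map_csSup' hne hb, hS])⟩

lemma OrderIso.apply_lt_self_of_apply_succ_eq [LinearOrder α] (h : α ≃o α) {u : ℤ → α}
    (hu : StrictMono u) (hbot : ¬BddBelow (range u)) (htop : ¬BddAbove (range u))
    (hh : ∀ k, h (u (k + 1)) = u k) (x : α) : h x < x := by
  obtain ⟨k, hk⟩ := hu.exists_mem_Ico hbot htop x
  calc h x < h (u (k + 1)) := h.strictMono hk.2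
    _ = u k := hh k
    _ ≤ x := hk.1

end Orbits

lemma OrderIso.isConj_of_forall_lt_apply (h₁ h₂ : ℝ ≃o ℝ) (hh₁ : ∀ x, x < h₁ x)
    (hh₂ : ∀ x, x < h₂ x) : IsConj h₁ h₂ := by
  obtain ⟨c₀, hc₀, hc₀'⟩ := exists_orderIso_apply_eq_apply_eq (hh₁ 0) (hh₂ 0)
  have hu := h₁.strictMono_zpow_apply_s4 hh₁ 0
  have hv := h₂.strictMono_zpow_apply_s4 hh₂ 0
  obtain ⟨hu_bot, hu_top⟩ :=
    h₁.not_bddBelow_and_not_bddAbove_range_zpow_apply (fun x => (hh₁ x).ne') 0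
  obtain ⟨hv_bot, hv_top⟩ :=
    h₂.not_bddBelow_and_not_bddAbove_range_zpow_apply (fun x => (hh₂ x).ne') 0
  obtain ⟨F, hF⟩ := exists_orderIso_eqOn_Icc (fun k => h₂ ^ k * c₀ * (h₁ ^ k)⁻¹) hu hv
    hu_bot hu_top hv_bot hv_top (fun k => by simp [RelIso.mul_apply, hc₀])
    (fun k => by simp [zpow_add_one, RelIso.mul_apply, hc₀'])
  have hcomm (x : ℝ) : F (h₁ x) = h₂ (F x) := by
    obtain ⟨k, hk⟩ := hu.exists_mem_Ico hu_bot hu_top x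
    have hk' : h₁ x ∈ Icc ((h₁ ^ (k + 1)) 0) ((h₁ ^ (k + 1 + 1)) 0) := by
      simp only [h₁.zpow_add_one_apply_s4] at hk ⊢
      exact ⟨h₁.monotone hk.1, h₁.monotone hk.2.le⟩
    rw [hF k (Ico_subset_Icc_self hk), hF (k + 1) hk']
    have : h₂ ^ (k + 1) * c₀ * (h₁ ^ (k + 1))⁻¹ * h₁ = h₂ * (h₂ ^ k * c₀ * (h₁ ^ k)⁻¹) := by
      group
    exact DFunLike.congr_fun this x
  exact isConj_iff.2 ⟨F, by ext x; simpa [RelIso.mul_apply] using hcomm (F⁻¹ x)⟩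

lemma OrderIso.isConj_of_forall_apply_lt (h₁ h₂ : ℝ ≃o ℝ) (hh₁ : ∀ x, h₁ x < x)
    (hh₂ : ∀ x, h₂ x < x) : IsConj h₁ h₂ := by
  have hinv (h : ℝ ≃o ℝ) (hh : ∀ x, h x < x) (x : ℝ) : x < h⁻¹ x := by
    simpa using hh (h⁻¹ x)
  obtain ⟨c, hc⟩ :=
    isConj_iff.1 (OrderIso.isConj_of_forall_lt_apply _ _ (hinv h₁ hh₁) (hinv h₂ hh₂))
  exact isConj_iff.2 ⟨c, inv_injective (by rw [conj_inv, hc])⟩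

lemma OrderIso.forall_lt_apply_or_forall_apply_lt (g : ℝ ≃o ℝ) (hg : ∀ x, g x ≠ x) :
    (∀ x, x < g x) ∨ ∀ x, g x < x := by
  by_contra! ⟨⟨a, ha⟩, ⟨b, hb⟩⟩
  obtain ⟨c, -, hc⟩ := intermediate_value_uIcc (a := a) (b := b)
    (g.continuous.sub continuous_id).continuousOn
    (show (0 : ℝ) ∈ uIcc (g a - a) (g b - b) from mem_uIcc.2 (Or.inl ⟨by linarith, by linarith⟩))
  exact hg c (sub_eq_zero.1 hc)

lemma List.prod_smul_eq_of_forall_smul_eq {M X : Type*} [Monoid M] [MulAction M X] (l : List M)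
    (x : ℕ → X) (h : ∀ k (hk : k < l.length), l[k] • x (k + 1) = x k) :
    l.prod • x l.length = x 0 := by
  induction l generalizing x with
  | nil => simp
  | cons g l ih =>
    rw [List.prod_cons, mul_smul, List.length_cons, ih (fun k => x (k + 1))
      fun k hk => h (k + 1) (by simpa using hk)]
    exact h 0 (by simp)

lemma StrictMonoOn.exists_orderIso_extend {D : Set ℤ} [NoMaxOrder D] [NoMinOrder D]
    {f : ℤ → ℤ} (hf : StrictMonoOn f D) : ∃ F : ℝ ≃o ℝ, ∀ t ∈ D, F t = f t := by
  classical
  rcases D.eq_empty_or_nonempty with rfl | ⟨t₀, ht₀⟩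
  · exact ⟨1, by simp⟩
  have : Nonempty D := ⟨⟨t₀, ht₀⟩⟩
  let := LinearLocallyFiniteOrder.succOrder D
  let := LinearLocallyFiniteOrder.predOrder D
  let e : ℤ ≃o D := orderIsoIntOfLinearSuccPredArch.symm
  obtain ⟨F, hF⟩ := exists_orderIso_apply_intCast_eq (u := fun k => e k)
    (fun _ _ h => e.strictMono h) (fun _ _ h => hf (e _).2 (e _).2 (e.strictMono h))
  exact ⟨F, fun t ht => by simpa using hF (e.symm ⟨t, ht⟩)⟩

section LetterShifts

variable {α : Type*}

/- The letter `(j, true)` at position `t` of the bi-infinite word `w` asks the generator `j` to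
send `t + 1` to `t`, and `(j, false)` asks it to send `t` to `t + 1`. -/
def letterDomain (w : ℤ → α × Bool) (j : α) : Set ℤ :=
  {s | w (s - 1) = (j, true) ∨ w s = (j, false)}

def letterShift [DecidableEq α] (w : ℤ → α × Bool) (j : α) (s : ℤ) : ℤ :=
  if w (s - 1) = (j, true) then s - 1 else s + 1

lemma strictMonoOn_letterShift [DecidableEq α] {w : ℤ → α × Bool} (j : α)
    (hw : ∀ t, (w t).1 = (w (t + 1)).1 → (w t).2 = (w (t + 1)).2) :
    StrictMonoOn (letterShift w j) (letterDomain w j) := by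
  intro s hs s' hs' hlt
  by_contra! hle
  simp only [letterShift] at hle
  split_ifs at hle with h' h
  · omega
  · have hs₀ : w s = (j, false) := hs.resolve_left h
    obtain rfl | rfl : s' = s + 1 ∨ s' = s + 2 := by omega
    · simp_all
    · have hs₁ : w (s + 1) = (j, true) := by simpa [add_sub_assoc] using h'
      simpa [hs₀, hs₁] using hw s
  · omega
  · omega

lemma exists_orderIso_letter_apply {w : ℤ → α × Bool}
    (hw : ∀ t, (w t).1 = (w (t + 1)).1 → (w t).2 = (w (t + 1)).2) {L : ℤ} (hL : 0 < L)
    (hper : Periodic w L) :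
    ∃ F : α → ℝ ≃o ℝ, ∀ t : ℤ, (bif (w t).2 then F (w t).1 else (F (w t).1)⁻¹) (t + 1) = t := by
  classical
  have (j : α) : NoMaxOrder (letterDomain w j) := ⟨fun s => ⟨⟨s + L, by
    show w (s + L - 1) = _ ∨ w (s + L) = _
    rw [add_sub_right_comm, hper, hper]
    exact s.2⟩, lt_add_of_pos_right _ hL⟩⟩
  have (j : α) : NoMinOrder (letterDomain w j) := ⟨fun s => ⟨⟨s - L, by
    show w (s - L - 1) = _ ∨ w (s - L) = _
    rw [sub_right_comm, hper.sub_eq, hper.sub_eq]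
    exact s.2⟩, sub_lt_self _ hL⟩⟩
  choose F hF using fun j => (strictMonoOn_letterShift j hw).exists_orderIso_extend
  refine ⟨F, fun t => ?_⟩
  rcases h : w t with ⟨j, _ | _⟩
  · have hprev : w (t - 1) ≠ (j, true) := fun h' => by simpa [h, h'] using hw (t - 1)
    have := hF j t (Or.inr h)
    simp only [letterShift, hprev, if_false, Int.cast_add, Int.cast_one] at this
    simp [← this]
  · simpa [letterShift, h] using hF j (t + 1) (Or.inl (by simpa using h))

end LetterShifts

section CyclicWord

variable {β : Type*} (l : List β) (hl : l ≠ [])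

def cyclicLetter (t : ℤ) : β :=
  l[t.natMod l.length]'(Int.natMod_lt (List.length_pos_iff.2 hl).ne')

lemma cyclicLetter_mul_add (q : ℤ) {k : ℕ} (hk : k < l.length) :
    cyclicLetter l hl (l.length * q + k) = l[k] := by
  simp only [cyclicLetter, Int.natMod]
  congr
  rw [add_comm, Int.add_mul_emod_self_left, Int.emod_eq_of_lt (by omega) (by omega)]
  simp

lemma periodic_cyclicLetter : Periodic (cyclicLetter l hl) l.length := by
  intro t
  simp [cyclicLetter, Int.natMod]

end CyclicWord

namespace FreeGroup

variable {α : Type*}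

lemma IsCyclicallyReduced.cyclicLetter_succ {l : List (α × Bool)} (h : IsCyclicallyReduced l)
    (hl : l ≠ []) (t : ℤ) :
    (cyclicLetter l hl t).1 = (cyclicLetter l hl (t + 1)).1 →
      (cyclicLetter l hl t).2 = (cyclicLetter l hl (t + 1)).2 := by
  have hL : (0 : ℤ) < l.length := by simpa using List.length_pos_iff.2 hl
  obtain ⟨q, k, hk, rfl⟩ : ∃ q : ℤ, ∃ k < l.length, t = l.length * q + k :=
    ⟨t / l.length, (t % l.length).toNat, by have := Int.emod_lt_of_pos t hL; omega,
      by rw [Int.toNat_of_nonneg (Int.emod_nonneg _ hL.ne'), Int.mul_ediv_add_emod]⟩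
  rw [cyclicLetter_mul_add l hl q hk]
  rcases (Nat.succ_le_of_lt hk).lt_or_eq with hk' | hk'
  · rw [add_assoc, show (k : ℤ) + 1 = (k + 1 : ℕ) by push_cast; rfl,
      cyclicLetter_mul_add l hl q hk']
    exact List.isChain_iff_getElem.1 h.1 k hk'
  · rw [add_assoc, show (k : ℤ) + 1 = l.length * 1 + (0 : ℕ) by omega, ← add_assoc, ← mul_add,
      cyclicLetter_mul_add l hl _ (List.length_pos_iff.2 hl)]
    refine h.2 _ ?_ _ (List.head?_eq_getElem? ▸ by simp)
    simp [List.getLast?_eq_getElem?, ← hk']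

theorem IsCyclicallyReduced.exists_hom_forall_apply_lt {l : List (α × Bool)}
    (h : IsCyclicallyReduced l) (hl : l ≠ []) :
    ∃ ρ : FreeGroup α →* ℝ ≃o ℝ, ∀ x, ρ (mk l) x < x := by
  have hL : (0 : ℤ) < l.length := by simpa using List.length_pos_iff.2 hl
  obtain ⟨F, hF⟩ :=
    exists_orderIso_letter_apply (h.cyclicLetter_succ hl) hL (periodic_cyclicLetter l hl)
  have hu : StrictMono fun q : ℤ => l.length * q := strictMono_mul_left_of_pos hL
  have hu' : StrictMono fun q : ℤ => ((l.length * q : ℤ) : ℝ) :=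
    fun _ _ h => Int.cast_lt.2 (hu h)
  obtain ⟨hbot, htop⟩ := hu.not_bddBelow_and_not_bddAbove_range_intCast
  refine ⟨lift F, fun x => (lift F (mk l)).apply_lt_self_of_apply_succ_eq hu' hbot htop
    (fun q => ?_) x⟩
  have := (l.map fun a => bif a.2 then F a.1 else (F a.1)⁻¹).prod_smul_eq_of_forall_smul_eq
    (fun k => ((l.length * q + k : ℤ) : ℝ)) fun k hk => by
      simp only [List.length_map] at hk
      simpa [← cyclicLetter_mul_add l hl q hk, add_assoc] using hF (l.length * q + k)
  simpa [lift_mk, mul_add] using this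

end FreeGroup

section WordMaps

variable {G H : Type*} [Group G] [Group H]

lemma MonoidHom.exists_apply_eq_of_isConj {w : G} {ρ : G →* H} {g : H} (h : IsConj (ρ w) g) :
    ∃ ρ' : G →* H, ρ' w = g := by
  obtain ⟨c, hc⟩ := isConj_iff.1 h
  exact ⟨(MulAut.conj c).toMonoidHom.comp ρ, hc⟩

lemma IsConj.exists_hom_apply_eq {w w' : G} (hw : IsConj w w') {ρ : G →* H} {g : H}
    (hρ : ρ w' = g) : ∃ ρ' : G →* H, ρ' w = g := by
  obtain ⟨c, rfl⟩ := isConj_iff.1 hw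
  exact ⟨ρ.comp (MulAut.conj c).toMonoidHom, hρ⟩

end WordMaps

namespace FreeGroup

variable {α : Type*}

theorem exists_hom_apply_eq_of_forall_apply_lt {w : FreeGroup α} (hw : w ≠ 1) {g : ℝ ≃o ℝ}
    (hg : ∀ x, g x < x) : ∃ ρ : FreeGroup α →* ℝ ≃o ℝ, ρ w = g := by
  classical
  set l := reduceCyclically w.toWord
  set c := mk (reduceCyclically.conjugator w.toWord)
  have hconj : c * mk l * c⁻¹ = w := by
    rw [inv_mk, mul_mk, mul_mk, reduceCyclically.conj_conjugator_reduceCyclically, mk_toWord]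
  have hl : l ≠ [] := by
    rintro hl
    rw [hl, ← one_eq_mk, mul_one, mul_inv_cancel] at hconj
    exact hw hconj.symm
  obtain ⟨ρ₀, hρ₀⟩ :=
    (reduceCyclically.isCyclicallyReduced isReduced_toWord).exists_hom_forall_apply_lt hl
  obtain ⟨ρ, hρ⟩ := ρ₀.exists_apply_eq_of_isConj (OrderIso.isConj_of_forall_apply_lt _ g hρ₀ hg)
  exact (isConj_iff.2 ⟨c, hconj⟩).symm.exists_hom_apply_eq hρ

theorem exists_hom_apply_eq_of_forall_apply_ne {w : FreeGroup α} (hw : w ≠ 1) {g : ℝ ≃o ℝ}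
    (hg : ∀ x, g x ≠ x) : ∃ ρ : FreeGroup α →* ℝ ≃o ℝ, ρ w = g := by
  rcases g.forall_lt_apply_or_forall_apply_lt hg with hup | hdown
  · obtain ⟨ρ, hρ⟩ := exists_hom_apply_eq_of_forall_apply_lt (inv_ne_one.2 hw) (g := g⁻¹)
      fun x => by simpa using hup (g⁻¹ x)
    exact ⟨ρ, by simpa using congrArg Inv.inv hρ⟩
  · exact exists_hom_apply_eq_of_forall_apply_lt hw hdown

end FreeGroup

section Gaps

variable {α : Type*}

lemma nonempty_orderIso_Ioo {a b : ℝ} (hab : a < b) : Nonempty (ℝ ≃o Ioo a b) := by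
  obtain ⟨A, hA, hA'⟩ := exists_orderIso_apply_eq_apply_eq (by norm_num : (-1 : ℝ) < 1) hab
  exact ⟨(orderIsoIooNegOneOne ℝ).trans
    (A.restrict _ _ fun x => by simp [← hA, ← hA', A.lt_iff_lt])⟩

def IsFixedPtGap [Preorder α] (g : α → α) (a b : α) : Prop :=
  a < b ∧ IsFixedPt g a ∧ IsFixedPt g b ∧ ∀ x ∈ Ioo a b, ¬IsFixedPt g x

lemma IsFixedPtGap.eq_of_mem [LinearOrder α] {g : α → α} {a b a' b' x : α}
    (h : IsFixedPtGap g a b) (h' : IsFixedPtGap g a' b') (hx : x ∈ Ioo a b)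
    (hx' : x ∈ Ioo a' b') : a = a' ∧ b = b' := by
  refine ⟨le_antisymm ?_ ?_, le_antisymm ?_ ?_⟩ <;> by_contra! hlt
  · exact h'.2.2.2 a ⟨hlt, hx.1.trans hx'.2⟩ h.2.1
  · exact h.2.2.2 a' ⟨hlt, hx'.1.trans hx.2⟩ h'.2.1
  · exact h.2.2.2 b' ⟨hx.1.trans hx'.2, hlt⟩ h'.2.2.1
  · exact h'.2.2.2 b ⟨hx'.1.trans hx.2, hlt⟩ h.2.2.1

lemma exists_isFixedPtGap [ConditionallyCompleteLinearOrder α] [TopologicalSpace α]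
    [OrderTopology α] {g : α → α} (hg : Continuous g) (hbot : ¬BddBelow (fixedPoints g))
    (htop : ¬BddAbove (fixedPoints g)) {x : α} (hx : ¬IsFixedPt g x) :
    ∃ a b, IsFixedPtGap g a b ∧ x ∈ Ioo a b := by
  have hclosed := isClosed_fixedPoints hg
  obtain ⟨a₀, ha₀, ha₀x⟩ := not_bddBelow_iff.1 hbot x
  obtain ⟨b₀, hb₀, hb₀x⟩ := not_bddAbove_iff.1 htop x
  have hA : BddAbove (fixedPoints g ∩ Iic x) := ⟨x, fun _ hy => hy.2⟩
  have hB : BddBelow (fixedPoints g ∩ Ici x) := ⟨x, fun _ hy => hy.2⟩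
  have ha := (hclosed.inter isClosed_Iic).csSup_mem ⟨a₀, ha₀, ha₀x.le⟩ hA
  have hb := (hclosed.inter isClosed_Ici).csInf_mem ⟨b₀, hb₀, hb₀x.le⟩ hB
  have hax : sSup (fixedPoints g ∩ Iic x) < x := ha.2.lt_of_ne fun h => hx (h ▸ ha.1)
  have hxb : x < sInf (fixedPoints g ∩ Ici x) := hb.2.lt_of_ne' fun h => hx (h ▸ hb.1)
  refine ⟨_, _, ⟨hax.trans hxb, ha.1, hb.1, fun y hy hfix => ?_⟩, hax, hxb⟩
  rcases le_total y x with hyx | hxy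
  · exact (hy.1.trans_le (le_csSup hA ⟨hfix, hyx⟩)).false
  · exact (hy.2.trans_le' (csInf_le hB ⟨hfix, hxy⟩)).false

end Gaps

theorem FreeGroup.exists_hom_apply_eq_of_unbounded_fixedPoints {α : Type*} {w : FreeGroup α}
    (hw : w ≠ 1) (g : ℝ ≃o ℝ) (hbot : ¬BddBelow (fixedPoints g))
    (htop : ¬BddAbove (fixedPoints g)) :
    ∃ ρ : FreeGroup α →* ℝ ≃o ℝ, ρ w = g ∧ ∀ v, ∀ x ∈ fixedPoints g, ρ v x = x := by
  let ι := {p : ℝ × ℝ // IsFixedPtGap g p.1 p.2}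
  let I (p : ι) : Set ℝ := Ioo p.1.1 p.1.2
  have hdisj : Pairwise (Disjoint on I) := fun p q hpq => not_not.1 fun h => by
    obtain ⟨x, hxp, hxq⟩ := not_disjoint_iff.1 h
    obtain ⟨h₁, h₂⟩ := p.2.eq_of_mem q.2 hxp hxq
    exact hpq (Subtype.ext (Prod.ext h₁ h₂))
  have hconn (p : ι) : (I p).OrdConnected := ordConnected_Ioo
  let τ (p : ι) : I p ≃o I p := g.restrict _ _ (g.apply_mem_Ioo_iff p.2.2.1 p.2.2.2.1)
  have hrep (p : ι) : ∃ σ : FreeGroup α →* I p ≃o I p, σ w = τ p := by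
    obtain ⟨e⟩ := nonempty_orderIso_Ioo p.2.1
    obtain ⟨ρ, hρ⟩ := exists_hom_apply_eq_of_forall_apply_ne hw (g := e.autCongr.symm (τ p))
      fun t ht => p.2.2.2.2 _ (e t).2 <| by
        simpa [e.symm_apply_eq, Subtype.ext_iff, τ, IsFixedPt] using ht
    exact ⟨e.autCongr.toMonoidHom.comp ρ, by simp [hρ]⟩
  choose σ hσ using hrep
  have hfixed (x : ℝ) (hx : IsFixedPt g x) (p : ι) : x ∉ I p := fun h => p.2.2.2.2 x h hx
  refine ⟨(OrderIso.glue hdisj hconn).comp (MonoidHom.pi σ), ?_, fun v x hx => ?_⟩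
  · ext x
    by_cases hx : IsFixedPt g x
    · simp [OrderIso.glue_apply_of_forall_notMem hdisj hconn _ (hfixed x hx), hx.eq]
    · obtain ⟨a, b, hab, hxab⟩ := exists_isFixedPtGap g.continuous hbot htop hx
      simp [OrderIso.glue_apply_of_mem hdisj hconn _ (i := ⟨(a, b), hab⟩) hxab, hσ, τ]
  · exact OrderIso.glue_apply_of_forall_notMem hdisj hconn _ (hfixed x hx)

theorem word_map_surjective_general (n : ℕ) (w : FreeGroup (Fin n)) (hw : w ≠ 1)
    (g : ℝ ≃o ℝ) :
    ∃ ρ : FreeGroup (Fin n) →* (ℝ ≃o ℝ), ρ w = g := by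
  let θ := orderIsoIooNegOneOne ℝ
  let G := OrderIso.glue (I := fun _ : Unit => Ioo (-1 : ℝ) 1) Subsingleton.pairwise
    (fun _ => ordConnected_Ioo) fun _ => θ.autCongr g
  have hG (x : ℝ) (hx : x ∉ Ioo (-1) 1) : IsFixedPt G x :=
    OrderIso.glue_apply_of_forall_notMem _ _ _ fun _ => hx
  have hbot : ¬BddBelow (fixedPoints G) := not_bddBelow_iff.2 fun x =>
    ⟨min x (-1) - 1, hG _ fun h => by linarith [h.1, min_le_right x (-1)],
      by linarith [min_le_left x (-1)]⟩
  have htop : ¬BddAbove (fixedPoints G) := not_bddAbove_iff.2 fun x =>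
    ⟨max x 1 + 1, hG _ fun h => by linarith [h.2, le_max_right x 1],
      by linarith [le_max_left x 1]⟩
  obtain ⟨ρ, hρw, hρfix⟩ := FreeGroup.exists_hom_apply_eq_of_unbounded_fixedPoints hw G hbot htop
  have hI (v) := (ρ v).apply_mem_Ioo_iff (hρfix v _ (hG (-1) (by simp)))
    (hρfix v _ (hG 1 (by simp)))
  refine ⟨θ.autCongr.symm.toMonoidHom.comp (OrderIso.restrictHom ρ _ hI), ?_⟩
  ext x
  rw [MonoidHom.comp_apply, MulEquiv.coe_toMonoidHom, OrderIso.restrictHom_apply,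
    θ.autCongr_symm_apply, θ.symm_apply_eq, Subtype.ext_iff, OrderIso.coe_restrict_apply, hρw,
    OrderIso.glue_apply_of_mem _ _ _ (i := ()) (θ x).2]
  simp

/-- Surjectivity of the word map: for every nontrivial word w in the free group
Fₙ and every g ∈ Homeo₊(ℝ) there is a representation ρ : Fₙ → Homeo₊(ℝ) with
ρ(w) = g. -/
theorem word_map_surjective (n : ℕ) (hn : 1 ≤ n) (w : FreeGroup (Fin n)) (hw : w ≠ 1)
    (g : ℝ ≃o ℝ) :
    ∃ ρ : FreeGroup (Fin n) →* (ℝ ≃o ℝ), ρ w = g :=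
  word_map_surjective_general n w hw g
end

section
/- Let G be a countable left orderable group, < a left order on G with dynamical realization ρ (a homomorphism G → Homeo₊(ℝ) such that f < g iff ρ(f)(0) < ρ(g)(0)). If ρ can be approximated arbitrarily well (in the topology of pointwise convergence with the compact-open topology on Homeo₊(ℝ)) by homomorphisms ρ' : G → Homeo₊(ℝ) having nontrivial stabilizer of some point in the ρ'-orbit of 0, then < is not isolated in the space of left orders LO(G). -/
/-! Order `G` by the position of `ρ'(g)(0)` for a perturbation `ρ'` of `ρ` with a nontrivial
stabilizer, breaking ties by the reverse of `<`. This is a left order; since `ρ'` is close to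
`ρ` at `0`, every `<`-positive element of a given finite set stays positive. The stabilizer
produces two distinct elements `gh` and `h` with the same orbit point, and on such a tie the new
order is the reverse of `<`, so it differs from `<`. -/

/-- A left-invariant strict total order on a group. -/
def IsLeftOrder (G : Type*) [Group G] (r : G → G → Prop) : Prop :=
  IsStrictTotalOrder G r ∧ ∀ a b c : G, r a b → r (c * a) (c * b)

open Filter Topology Function

section OrbitLex

variable {G α : Type*} [Group G] [LinearOrder α]

def orbitLex (ρ : G →* (α ≃o α)) (x : α) (s : G → G → Prop) (a b : G) : Prop :=
  ρ a x < ρ b x ∨ (ρ a x = ρ b x ∧ s a b)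

theorem IsLeftOrder.swap {r : G → G → Prop} (hr : IsLeftOrder G r) : IsLeftOrder G (swap r) :=
  have := hr.1
  ⟨inferInstance, fun a b c hab => hr.2 b a c hab⟩

theorem IsLeftOrder.orbitLex {s : G → G → Prop} (hs : IsLeftOrder G s) (ρ : G →* (α ≃o α))
    (x : α) : IsLeftOrder G (orbitLex ρ x s) := by
  obtain ⟨hsto, hinv⟩ := hs
  refine ⟨{ irrefl := ?irrefl, trans := ?trans, trichotomous := ?trichotomous }, ?mul_left⟩
  case irrefl =>
    rintro a (h | ⟨-, h⟩)
    exacts [lt_irrefl _ h, irrefl_of s a h]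
  case trans =>
    rintro a b c (hab | ⟨hab, hab'⟩) (hbc | ⟨hbc, hbc'⟩)
    · exact Or.inl (hab.trans hbc)
    · exact Or.inl (hbc ▸ hab)
    · exact Or.inl (hab ▸ hbc)
    · exact Or.inr ⟨hab.trans hbc, trans_of s hab' hbc'⟩
  case trichotomous =>
    intro a b hab hba
    obtain hlt | heq | hgt := lt_trichotomy (ρ a x) (ρ b x)
    · exact absurd (Or.inl hlt) hab
    · obtain h | h | h := trichotomous_of s a b
      exacts [absurd (Or.inr ⟨heq, h⟩) hab, h, absurd (Or.inr ⟨heq.symm, h⟩) hba]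
    · exact absurd (Or.inl hgt) hba
  case mul_left =>
    have hmul (c a : G) : ρ (c * a) x = ρ c (ρ a x) := by rw [map_mul]; rfl
    rintro a b c (h | ⟨h, h'⟩)
    · exact Or.inl (by simpa only [hmul] using (ρ c).lt_iff_lt.mpr h)
    · exact Or.inr ⟨by rw [hmul, hmul, h], hinv a b c h'⟩

theorem orbitLex_swap_ne_of_stabilizer {r : G → G → Prop} [IsStrictTotalOrder G r]
    {ρ : G →* (α ≃o α)} {x : α} {g h : G} (hg : g ≠ 1) (hfix : ρ g (ρ h x) = ρ h x) :
    orbitLex ρ x (swap r) ≠ r := by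
  have htie : ρ (g * h) x = ρ h x := by rw [map_mul]; exact hfix
  have hswap : orbitLex ρ x (swap r) (g * h) h ↔ r h (g * h) := by
    simp only [orbitLex, htie, lt_irrefl, true_and, false_or, swap]
  intro heq
  rw [heq] at hswap
  obtain hlt | heq' | hgt := trichotomous_of r (g * h) h
  · exact asymm hlt (hswap.mp hlt)
  · exact hg (mul_eq_right.mp heq')
  · exact asymm hgt (hswap.mpr hgt)

end OrbitLex

theorem not_isolated_of_approx_general (G : Type*) [Group G]
    (r : G → G → Prop) (hr : IsLeftOrder G r)
    (ρ : G →* (ℝ ≃o ℝ))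
    (hreal : ∀ f g : G, r f g ↔ ρ f 0 < ρ g 0)
    (happrox : ∀ (F : Finset G) (K : Set ℝ), IsCompact K → ∀ ε : ℝ, 0 < ε →
      ∃ ρ' : G →* (ℝ ≃o ℝ),
        (∀ g ∈ F, ∀ x ∈ K, |ρ' g x - ρ g x| ≤ ε) ∧
        (∃ g : G, g ≠ 1 ∧ ∃ h : G, ρ' g (ρ' h 0) = ρ' h 0)) :
    ∀ F : Finset G, (∀ g ∈ F, r 1 g) →
      ∃ r' : G → G → Prop, IsLeftOrder G r' ∧ r' ≠ r ∧ ∀ g ∈ F, r' 1 g := by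
  intro F hF
  have hpos (g : G) (hg : g ∈ F) : 0 < ρ g 0 := by simpa using (hreal 1 g).mp (hF g hg)
  obtain ⟨ε, hε, hεF⟩ : ∃ ε, 0 < ε ∧ ∀ g ∈ F, ε < ρ g 0 :=
    (eventually_mem_nhdsWithin.and ((eventually_all_finset F).mpr fun g hg =>
      nhdsWithin_le_nhds (eventually_lt_nhds (hpos g hg)))).exists (f := 𝓝[>] (0 : ℝ))
  obtain ⟨ρ', hclose, g, hg, h, hfix⟩ := happrox F {0} isCompact_singleton ε hε
  have : IsStrictTotalOrder G r := hr.1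
  refine ⟨orbitLex ρ' 0 (swap r), hr.swap.orbitLex ρ' 0,
    orbitLex_swap_ne_of_stabilizer hg hfix, fun g' hg' => Or.inl ?_⟩
  have hclose₀ := (abs_le.mp (hclose g' hg' 0 rfl)).1
  simp only [map_one, RelIso.coe_one, id_eq]
  linarith [hεF g' hg']

/-- Proposition: let `r` be a left order on a countable group `G` with dynamical
realization `ρ` (so `r f g ↔ ρ(f)(0) < ρ(g)(0)`). If `ρ` can be approximated
arbitrarily well, uniformly on compact sets over any finite set of group
elements, by representations `ρ'` having a nontrivial stabilizer of some point
of the `ρ'`-orbit of `0`, then `r` is not isolated in the space of left orders: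
for every finite set `F` of `r`-positive elements there is a left order `r' ≠ r`
making every element of `F` positive. -/
theorem not_isolated_of_approx (G : Type*) [Group G] [Countable G]
    (r : G → G → Prop) (hr : IsLeftOrder G r)
    (ρ : G →* (ℝ ≃o ℝ))
    (hreal : ∀ f g : G, r f g ↔ ρ f 0 < ρ g 0)
    (happrox : ∀ (F : Finset G) (K : Set ℝ), IsCompact K → ∀ ε : ℝ, 0 < ε →
      ∃ ρ' : G →* (ℝ ≃o ℝ),
        (∀ g ∈ F, ∀ x ∈ K, |ρ' g x - ρ g x| ≤ ε) ∧
        (∃ g : G, g ≠ 1 ∧ ∃ h : G, ρ' g (ρ' h 0) = ρ' h 0)) :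
    ∀ F : Finset G, (∀ g ∈ F, r 1 g) →
      ∃ r' : G → G → Prop, IsLeftOrder G r' ∧ r' ≠ r ∧ ∀ g ∈ F, r' 1 g :=
  not_isolated_of_approx_general G r hr ρ hreal happrox
end

section
/- Let ρ : F_n → Homeo₊(ℝ), points p₁,…,p_k ∈ ℝ and words v₁,…,v_k, w ∈ F_n with w reduced and nonempty. Set d_{ij} = d_{v_j}(S(ρ,v_j,p_j), i) and d_i = d_w(S(ρ,w,p), i). If p ≥ max of all entries of the trajectories S(ρ,v_j,p_j) for j = 1,…,k, then there exists an index i₀ such that d_{i₀} ≥ max_j d_{i₀ j}. -/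
/-- The homeomorphism corresponding to a letter `xᵢ^{±1}`. -/
def ofLetter {n : ℕ} (ρ : FreeGroup (Fin n) →* (ℝ ≃o ℝ)) (a : Fin n × Bool) : ℝ ≃o ℝ :=
  if a.2 then ρ (FreeGroup.of a.1) else (ρ (FreeGroup.of a.1))⁻¹

/-- The trajectory `S(ρ,w,x) = (ρ(w₀)(x), …, ρ(w_m)(x))` of `x` by the word
`w = a_m ⋯ a₁` (letters applied from the right, so we scan over the reversed
reduced word of `w`). -/
def traj {n : ℕ} (ρ : FreeGroup (Fin n) →* (ℝ ≃o ℝ)) (w : FreeGroup (Fin n))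
    (x : ℝ) : List ℝ :=
  (w.toWord.reverse).scanl (fun y a => ofLetter ρ a y) x

/-- `D_w(S,i)`: the set of points `s_j` of the sequence `S` at which the
generator `xᵢ` is applied, i.e. `a_{j+1} = xᵢ` or `a_j = xᵢ⁻¹`. Here `L` is the
list of letters of `w` in order of application (`L[j-1] = a_j`). -/
def Dset {n : ℕ} (L : List (Fin n × Bool)) (S : List ℝ) (i : Fin n) : Set ℝ :=
  {y | ∃ j : ℕ, S[j]? = some y ∧
    (L[j]? = some (i, true) ∨ (1 ≤ j ∧ L[j - 1]? = some (i, false)))}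

/-- `d_w(S,i) = max D_w(S,i)`, with value `⊥ = -∞` when `xᵢ` does not occur. -/
noncomputable def dmax {n : ℕ} (L : List (Fin n × Bool)) (S : List ℝ) (i : Fin n) :
    EReal :=
  sSup ((fun y : ℝ => (y : EReal)) '' (Dset L S i))

/-!
`D_w(S, i)` collects, for each step of the trajectory along the generator `xᵢ` (in either
direction), the endpoint `z` of that step with `ρ(xᵢ) z` the other endpoint. Hence every point
`y` of `D_{vⱼ}(S(ρ,vⱼ,pⱼ), i)` satisfies `y ≤ p` and `ρ(xᵢ) y ≤ p`. On the other hand the largest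
entry `s ≥ p` of `S(ρ,w,p)` is an endpoint of some step, along `x_{i₀}` say, so there is
`z ∈ D_w(S(ρ,w,p), i₀)` with `z = s` or `ρ(x_{i₀}) z = s`. In both cases `y ≤ z` for every such
`y`, as `ρ(x_{i₀})` is increasing.
-/

section Trajectory

variable {n : ℕ} (ρ : FreeGroup (Fin n) →* (ℝ ≃o ℝ))

@[simp]
lemma apply_ofLetter_true (i : Fin n) (y : ℝ) : ofLetter ρ (i, true) y = ρ (.of i) y := rfl

@[simp]
lemma apply_ofLetter_false (i : Fin n) (y : ℝ) :
    ρ (.of i) (ofLetter ρ (i, false) y) = y :=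
  (ρ (.of i)).apply_symm_apply y

lemma mem_and_apply_mem_of_mem_Dset {L : List (Fin n × Bool)} {x y : ℝ} {i : Fin n}
    (hy : y ∈ Dset L (L.scanl (fun y a => ofLetter ρ a y) x) i) :
    y ∈ L.scanl (fun y a => ofLetter ρ a y) x ∧
      ρ (.of i) y ∈ L.scanl (fun y a => ofLetter ρ a y) x := by
  obtain ⟨j, hyj, hstep | ⟨hj, hstep⟩⟩ := hy
  · refine ⟨List.mem_of_getElem? hyj, List.mem_of_getElem? (i := j + 1) ?_⟩
    simp [List.getElem?_succ_scanl, hyj, hstep]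
  · obtain ⟨j, rfl⟩ : ∃ j', j = j' + 1 := ⟨j - 1, by omega⟩
    have hyS := List.mem_of_getElem? hyj
    simp only [Nat.add_sub_cancel] at hstep
    simp only [List.getElem?_succ_scanl, hstep, Option.map_some, Option.bind_eq_some_iff,
      Option.some.injEq] at hyj
    obtain ⟨y', hy', rfl⟩ := hyj
    exact ⟨hyS, by simpa using List.mem_of_getElem? hy'⟩

lemma exists_mem_Dset_of_step {L : List (Fin n × Bool)} {x s : ℝ} {i : Fin n} {b : Bool}
    {j : ℕ} (hstep : L[j]? = some (i, b))
    (hs : (L.scanl (fun y a => ofLetter ρ a y) x)[j]? = some s ∨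
      (L.scanl (fun y a => ofLetter ρ a y) x)[j + 1]? = some s) :
    ∃ z ∈ Dset L (L.scanl (fun y a => ofLetter ρ a y) x) i, z = s ∨ ρ (.of i) z = s := by
  set S := L.scanl (fun y a => ofLetter ρ a y) x
  have hj : j < S.length := by
    have := (List.getElem?_eq_some_iff.1 hstep).1
    simp only [S, List.length_scanl]
    omega
  have hcur : S[j]? = some S[j] := List.getElem?_eq_getElem hj
  have hnext : S[j + 1]? = some (ofLetter ρ (i, b) S[j]) := by
    simp [S, List.getElem?_succ_scanl, hcur, hstep]
  cases b
  · refine ⟨_, ⟨j + 1, hnext, .inr ⟨by omega, by simpa using hstep⟩⟩, ?_⟩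
    rcases hs with hs | hs <;> simp_all
  · refine ⟨_, ⟨j, hcur, .inl hstep⟩, ?_⟩
    rcases hs with hs | hs <;> simp_all

lemma exists_mem_Dset_endpoint {L : List (Fin n × Bool)} (hL : L ≠ []) {x s : ℝ}
    (hs : s ∈ L.scanl (fun y a => ofLetter ρ a y) x) :
    ∃ i, ∃ z ∈ Dset L (L.scanl (fun y a => ofLetter ρ a y) x) i, z = s ∨ ρ (.of i) z = s := by
  obtain ⟨m, hm, rfl⟩ := List.getElem_of_mem hs
  have hlen : 0 < L.length := List.length_pos_iff.2 hL
  rw [List.length_scanl] at hm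
  by_cases hmL : m < L.length
  · exact ⟨_, exists_mem_Dset_of_step ρ (b := L[m].2) (List.getElem?_eq_getElem hmL)
      (.inl (List.getElem?_eq_getElem _))⟩
  · obtain ⟨j, rfl⟩ : ∃ j, m = j + 1 := ⟨m - 1, by omega⟩
    exact ⟨_, exists_mem_Dset_of_step ρ (b := L[j].2) (List.getElem?_eq_getElem (by omega))
      (.inr (List.getElem?_eq_getElem _))⟩

end Trajectory

/-- Lemma: if p is greater than or equal to every entry of the trajectories
S(ρ,vⱼ,pⱼ), then there is a generator index i₀ with
d_{i₀} = d_w(S(ρ,w,p),i₀) ≥ max_j d_{vⱼ}(S(ρ,vⱼ,pⱼ),i₀). -/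
theorem exists_dominating_index (n k : ℕ) (ρ : FreeGroup (Fin n) →* (ℝ ≃o ℝ))
    (w : FreeGroup (Fin n)) (hw : w ≠ 1)
    (vs : Fin k → FreeGroup (Fin n)) (ps : Fin k → ℝ) (p : ℝ)
    (hp : ∀ j : Fin k, ∀ y ∈ traj ρ (vs j) (ps j), y ≤ p) :
    ∃ i₀ : Fin n, ∀ j : Fin k,
      dmax ((vs j).toWord.reverse) (traj ρ (vs j) (ps j)) i₀ ≤
        dmax (w.toWord.reverse) (traj ρ w p) i₀ := by
  have hL : w.toWord.reverse ≠ [] := by simpa [FreeGroup.toWord_eq_nil_iff] using hw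
  have hpS : p ∈ traj ρ w p := List.mem_of_getElem? List.getElem?_scanl_zero
  obtain ⟨s, hsS, hs_max⟩ := Set.exists_max_image {y | y ∈ traj ρ w p} id
    (List.finite_toSet _) ⟨p, hpS⟩
  obtain ⟨i, z, hz, hzs⟩ := exists_mem_Dset_endpoint ρ hL hsS
  refine ⟨i, fun j => sSup_le ?_⟩
  rintro _ ⟨y, hy, rfl⟩
  obtain ⟨hyS, hgyS⟩ := mem_and_apply_mem_of_mem_Dset ρ hy
  have hps : p ≤ s := hs_max p hpS
  have hyz : y ≤ z := by
    rcases hzs with rfl | hgz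
    · exact (hp j y hyS).trans hps
    · exact (ρ (.of i)).le_iff_le.1 (hgz ▸ (hp j _ hgyS).trans hps)
  exact (EReal.coe_le_coe_iff.2 hyz).trans (le_sSup ⟨z, hz, rfl⟩)
end
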